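/- arXiv:1708.09579 — 2 statements merged into one kernel-verified Lean document; each statement's English description precedes it below -/
import Mathlib

section
/- Every 3-edge-connected graph contains an anchored chain cover. -/
/-- A finite multigraph; loops and parallel edges are allowed.  Every edge `e`
joins the two (possibly equal) vertices `fst e` and `snd e`; the functions
`fst`/`snd` also fix a reference orientation of each edge. -/
structure Multigraph where
  V : Type
  E : Type
  [fintypeV : Fintype V]
  [decEqV : DecidableEq V]
  [fintypeE : Fintype E]
  [decEqE : DecidableEq E]
  fst : E → V
  snd : E → V

attribute [instance] Multigraph.fintypeV Multigraph.decEqV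
attribute [instance] Multigraph.fintypeE Multigraph.decEqE

namespace Multigraph

variable (G : Multigraph)

/-- The edge `e` is incident with the vertex `v`. -/
def Inc (e : G.E) (v : G.V) : Prop :=
  G.fst e = v ∨ G.snd e = v

/-- The edge `e` joins the vertices `x` and `y` (in either order). -/
def Joins (e : G.E) (x y : G.V) : Prop :=
  (G.fst e = x ∧ G.snd e = y) ∨ (G.fst e = y ∧ G.snd e = x)

/-- The degree of a vertex; a loop contributes `2`. -/
def degree (v : G.V) : ℕ :=
  (Finset.univ.filter fun e => G.fst e = v).card +
    (Finset.univ.filter fun e => G.snd e = v).card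

/-- The set of edges with exactly one endpoint in the vertex set `A`. -/
def cut (A : Finset G.V) : Finset G.E :=
  Finset.univ.filter fun e =>
    (G.fst e ∈ A ∧ G.snd e ∉ A) ∨ (G.fst e ∉ A ∧ G.snd e ∈ A)

/-- A multigraph is `k`-edge-connected if it has at least two vertices and
every edge cut has at least `k` edges. -/
def EdgeConnected (k : ℕ) : Prop :=
  2 ≤ Fintype.card G.V ∧
    ∀ A : Finset G.V, A.Nonempty → A ≠ Finset.univ → k ≤ (G.cut A).card

end Multigraph

/-- A walk in a multigraph from `x` to `y`, as a sequence of incident edges. -/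
inductive Multigraph.Walk (G : Multigraph) : G.V → G.V → Type where
  | nil (v : G.V) : Multigraph.Walk G v v
  | cons {x y z : G.V} (e : G.E) (h : G.Joins e x y)
      (p : Multigraph.Walk G y z) : Multigraph.Walk G x z

/-- The list of edges of a walk. -/
def Multigraph.Walk.edges {G : Multigraph} :
    ∀ {x y : G.V}, G.Walk x y → List G.E
  | _, _, .nil _ => []
  | _, _, .cons e _ p => e :: p.edges

/-- `x` and `y` are connected by a walk all of whose edges satisfy `P`. -/
def Multigraph.ReachableIn (G : Multigraph) (P : G.E → Prop) (x y : G.V) : Prop :=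
  ∃ p : G.Walk x y, ∀ e ∈ p.edges, P e

namespace Multigraph

variable (G : Multigraph)

/-- The degree of `v` in the edge set `F`; loops count twice. -/
def degIn (F : Finset G.E) (v : G.V) : ℕ :=
  (F.filter fun e => G.fst e = v).card + (F.filter fun e => G.snd e = v).card

/-- The edge set `F` forms a single cycle (possibly a loop, or a pair of
parallel edges): it is nonempty, every vertex has degree `0` or `2` in `F`,
and all vertices met by `F` are connected to each other through `F`. -/
def IsCycleEdges (F : Finset G.E) : Prop :=
  F.Nonempty ∧ (∀ v : G.V, G.degIn F v = 0 ∨ G.degIn F v = 2) ∧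
    ∀ x y : G.V, 0 < G.degIn F x → 0 < G.degIn F y → G.ReachableIn (· ∈ F) x y

/-- There exist two edge-disjoint paths (trails) from `u` to `v` using only
edges from `F`. -/
def TwoEDP (F : Finset G.E) (u v : G.V) : Prop :=
  ∃ p q : G.Walk u v, p.edges.Nodup ∧ q.edges.Nodup ∧
    (∀ e ∈ p.edges, e ∉ q.edges) ∧
    (∀ e ∈ p.edges, e ∈ F) ∧ (∀ e ∈ q.edges, e ∈ F)

/-- The subgraph `(S, F)` of `G` is a `(u,v)`-chain: a subgraph-minimal
subgraph containing two edge-disjoint paths from `u` to `v`.  (Equivalently,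
a graph obtained from a `u`–`v` path by doubling all edges and subdividing
some of them; a single vertex `u` is a `(u,u)`-chain.) -/
def IsChain (S : Finset G.V) (F : Finset G.E) (u v : G.V) : Prop :=
  u ∈ S ∧ v ∈ S ∧ (∀ e ∈ F, G.fst e ∈ S ∧ G.snd e ∈ S) ∧ G.TwoEDP F u v ∧
    ∀ S', S' ⊆ S → ∀ F', F' ⊆ F → u ∈ S' → v ∈ S' →
      (∀ e ∈ F', G.fst e ∈ S' ∧ G.snd e ∈ S') → G.TwoEDP F' u v →
        S' = S ∧ F' = F

end Multigraph

/-- An anchored chain cover of `G`: vertex-disjoint chains `C_0, …, C_{k-1}`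
covering all vertices of `G`, where `C_0` is a cycle and, for `i ≥ 1`, the
chain `C_i` joining `endA i` to `endB i` is attached to the union of the
earlier chains by two distinct anchor edges. -/
structure Multigraph.AnchoredChainCover (G : Multigraph) where
  k : ℕ
  kpos : 0 < k
  S : Fin k → Finset G.V
  F : Fin k → Finset G.E
  endA : Fin k → G.V
  endB : Fin k → G.V
  anchor1 : Fin k → G.E
  anchor2 : Fin k → G.E
  chain : ∀ i : Fin k, G.IsChain (S i) (F i) (endA i) (endB i)
  first_cycle : G.IsCycleEdges (F ⟨0, kpos⟩)
  disj : ∀ i j : Fin k, i ≠ j → Disjoint (S i) (S j)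
  cover : ∀ x : G.V, ∃ i : Fin k, x ∈ S i
  anchor_ne : ∀ i : Fin k, i ≠ ⟨0, kpos⟩ → anchor1 i ≠ anchor2 i
  anchor1_spec : ∀ i : Fin k, i ≠ ⟨0, kpos⟩ →
    ∃ x : G.V, G.Joins (anchor1 i) (endA i) x ∧ ∃ j : Fin k, j < i ∧ x ∈ S j
  anchor2_spec : ∀ i : Fin k, i ≠ ⟨0, kpos⟩ →
    ∃ y : G.V, G.Joins (anchor2 i) (endB i) y ∧ ∃ j : Fin k, j < i ∧ y ∈ S j

namespace Multigraph.AnchoredChainCover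

variable {G : Multigraph} (c : G.AnchoredChainCover)

/-- The set of all edges of the chains of the cover. -/
def chainEdges : Finset G.E := Finset.univ.biUnion c.F

/-- The set of anchors of the cover. -/
def anchors : Finset G.E :=
  (Finset.univ.filter fun i : Fin c.k => i ≠ ⟨0, c.kpos⟩).biUnion
    fun i => {c.anchor1 i, c.anchor2 i}

/-- The external edges: the edges of `G` neither on a chain nor anchors. -/
def external : Finset G.E :=
  Finset.univ.filter fun e => e ∉ c.chainEdges ∧ e ∉ c.anchors

/-- The number of cycles contained in the union of the chains. -/
noncomputable def numCycles : ℕ :=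
  Nat.card {F' : Finset G.E // F' ⊆ c.chainEdges ∧ G.IsCycleEdges F'}

end Multigraph.AnchoredChainCover

/-!
The cover is grown greedily. An edge `xy` together with an `x`-`y` path avoiding it is a cycle,
and a cycle through two distinct vertices is a chain. If the chains so far cover `W ≠ V`, take a
smallest nonempty `A ⊆ V \ W` that is left by at most one edge avoiding `W`. Since at least
three edges leave `A`, two of them go to `W`; they are the anchors, with ends `a, b ∈ A`. By
minimality every proper part of `A` is left by two edges inside `A`, so Menger's theorem gives
two edge-disjoint `a`-`b` trails inside `A`, and a minimal subgraph carrying them is an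
`(a,b)`-chain.
-/

namespace Multigraph

variable {G : Multigraph}

theorem Joins.symm {e : G.E} {x y : G.V} (h : G.Joins e x y) : G.Joins e y x :=
  Or.symm h

theorem Joins.eq_or_eq {e : G.E} {x y x' y' : G.V} (h : G.Joins e x y)
    (h' : G.Joins e x' y') : (x' = x ∧ y' = y) ∨ (x' = y ∧ y' = x) := by
  rcases h with ⟨rfl, rfl⟩ | ⟨rfl, rfl⟩ <;> rcases h' with ⟨h1, h2⟩ | ⟨h1, h2⟩ <;>
    simp [h1, h2]

theorem Joins.inc_left {e : G.E} {x y : G.V} (h : G.Joins e x y) : G.Inc e x := by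
  rcases h with ⟨h, -⟩ | ⟨-, h⟩
  exacts [Or.inl h, Or.inr h]

theorem mem_cut {A : Finset G.V} {e : G.E} :
    e ∈ G.cut A ↔ (G.fst e ∈ A ∧ G.snd e ∉ A) ∨ (G.fst e ∉ A ∧ G.snd e ∈ A) := by
  simp [cut]

theorem Joins.mem_cut {e : G.E} {x y : G.V} {A : Finset G.V} (h : G.Joins e x y)
    (hx : x ∈ A) (hy : y ∉ A) : e ∈ G.cut A := by
  rcases h with ⟨rfl, rfl⟩ | ⟨rfl, rfl⟩ <;> simp [Multigraph.mem_cut, hx, hy]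

namespace Walk

def support : ∀ {x y : G.V}, G.Walk x y → List G.V
  | x, _, .nil _ => [x]
  | x, _, .cons _ _ p => x :: p.support

def append : ∀ {x y z : G.V}, G.Walk x y → G.Walk y z → G.Walk x z
  | _, _, _, .nil _, q => q
  | _, _, _, .cons e h p, q => .cons e h (p.append q)

def reverse : ∀ {x y : G.V}, G.Walk x y → G.Walk y x
  | _, _, .nil v => .nil v
  | _, _, .cons e h p => p.reverse.append (.cons e h.symm (.nil _))

variable {x y z : G.V}

@[simp] theorem support_nil : (nil x : G.Walk x x).support = [x] := rfl

@[simp] theorem support_cons (e : G.E) (h : G.Joins e x y) (p : G.Walk y z) :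
    (cons e h p).support = x :: p.support := rfl

@[simp] theorem edges_nil : (nil x : G.Walk x x).edges = [] := rfl

@[simp] theorem edges_cons (e : G.E) (h : G.Joins e x y) (p : G.Walk y z) :
    (cons e h p).edges = e :: p.edges := rfl

@[simp] theorem edges_append (p : G.Walk x y) (q : G.Walk y z) :
    (p.append q).edges = p.edges ++ q.edges := by
  induction p with
  | nil => rfl
  | cons e h p ih => simp [append, ih]

@[simp] theorem edges_reverse (p : G.Walk x y) : p.reverse.edges = p.edges.reverse := by
  induction p with
  | nil => rfl
  | cons e h p ih => simp [reverse, ih]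

theorem start_mem_support (p : G.Walk x y) : x ∈ p.support := by
  cases p <;> simp

theorem end_mem_support (p : G.Walk x y) : y ∈ p.support := by
  induction p with
  | nil => simp
  | cons e h p ih => simp [ih]

theorem fst_mem_support (p : G.Walk x y) {e : G.E} (he : e ∈ p.edges) :
    G.fst e ∈ p.support := by
  induction p with
  | nil => simp at he
  | cons f h p ih =>
    simp only [edges_cons, List.mem_cons] at he
    simp only [support_cons, List.mem_cons]
    rcases he with rfl | he
    · rcases h with ⟨h, -⟩ | ⟨h, -⟩
      exacts [.inl h, .inr (h ▸ p.start_mem_support)]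
    · exact .inr (ih he)

theorem snd_mem_support (p : G.Walk x y) {e : G.E} (he : e ∈ p.edges) :
    G.snd e ∈ p.support := by
  induction p with
  | nil => simp at he
  | cons f h p ih =>
    simp only [edges_cons, List.mem_cons] at he
    simp only [support_cons, List.mem_cons]
    rcases he with rfl | he
    · rcases h with ⟨-, h⟩ | ⟨-, h⟩
      exacts [.inr (h ▸ p.start_mem_support), .inl h]
    · exact .inr (ih he)

theorem exists_mem_cut (p : G.Walk x y) {A : Finset G.V} (hx : x ∈ A) (hy : y ∉ A) :
    ∃ e ∈ p.edges, e ∈ G.cut A := by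
  induction p with
  | nil => exact absurd hx hy
  | @cons x z y e h p ih =>
    by_cases hz : z ∈ A
    · obtain ⟨f, hf, hfA⟩ := ih hz hy
      exact ⟨f, List.mem_cons_of_mem _ hf, hfA⟩
    · exact ⟨e, List.mem_cons_self, h.mem_cut hx hz⟩

theorem exists_split_of_mem_support (p : G.Walk x y) {v : G.V} (hv : v ∈ p.support) :
    ∃ (q : G.Walk x v) (r : G.Walk v y), p.edges = q.edges ++ r.edges ∧
      p.support = q.support ++ r.support.tail := by
  induction p with
  | nil =>
    simp only [support_nil, List.mem_singleton] at hv
    subst hv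
    exact ⟨nil _, nil _, rfl, rfl⟩
  | @cons a b c e h p ih =>
    by_cases hva : v = a
    · subst hva; exact ⟨nil _, cons e h p, rfl, rfl⟩
    · obtain ⟨q, r, he, hs⟩ := ih (by simpa [hva] using hv)
      exact ⟨cons e h q, r, by simp [he], by simp [hs]⟩

theorem exists_split_of_mem_edges (p : G.Walk x y) {e : G.E} (he : e ∈ p.edges)
    {a b : G.V} (hj : G.Joins e a b) :
    (∃ (q : G.Walk x a) (r : G.Walk b y), p.edges = q.edges ++ e :: r.edges) ∨
      (∃ (q : G.Walk x b) (r : G.Walk a y), p.edges = q.edges ++ e :: r.edges) := by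
  induction p with
  | nil => simp at he
  | cons f hf p ih =>
    rcases eq_or_ne e f with rfl | hne
    · rcases hj.eq_or_eq hf with ⟨rfl, rfl⟩ | ⟨rfl, rfl⟩
      · exact .inl ⟨nil _, p, rfl⟩
      · exact .inr ⟨nil _, p, rfl⟩
    · rcases ih (by simpa [hne] using he) with ⟨q, r, h⟩ | ⟨q, r, h⟩
      · exact .inl ⟨cons f hf q, r, by simp [h]⟩
      · exact .inr ⟨cons f hf q, r, by simp [h]⟩

theorem exists_support_nodup (p : G.Walk x y) :
    ∃ q : G.Walk x y, q.support.Nodup ∧ q.edges ⊆ p.edges := by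
  induction p with
  | nil => exact ⟨nil _, by simp, by simp⟩
  | @cons a b c e h p ih =>
    obtain ⟨q, hq, hqp⟩ := ih
    by_cases ha : a ∈ q.support
    · obtain ⟨q₁, r, he, hs⟩ := q.exists_split_of_mem_support ha
      refine ⟨r, ?_, fun f hf => List.mem_cons_of_mem _ (hqp (by simp [he, hf]))⟩
      rw [hs] at hq
      cases r with
      | nil => simp
      | cons f hf r =>
        simp only [support_cons, List.tail_cons] at hq ⊢
        exact List.nodup_cons.mpr ⟨List.disjoint_of_nodup_append hq q₁.end_mem_support,
          hq.of_append_right⟩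
    · exact ⟨cons e h q, by simp [ha, hq], List.cons_subset_cons _ hqp⟩

theorem edges_nodup_of_support_nodup {p : G.Walk x y} (h : p.support.Nodup) :
    p.edges.Nodup := by
  induction p with
  | nil => simp
  | cons e hj p ih =>
    simp only [support_cons, List.nodup_cons] at h
    refine List.nodup_cons.mpr ⟨fun he => h.1 ?_, ih h.2⟩
    rcases hj with ⟨rfl, -⟩ | ⟨-, rfl⟩
    exacts [p.fst_mem_support he, p.snd_mem_support he]

end Walk

section Reachability

variable {x y z : G.V}

theorem Walk.exists_prefix_until_mem (p : G.Walk x y) {X : Set G.V} (hy : y ∈ X) :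
    ∃ w ∈ X, ∃ q : G.Walk x w, q.edges.Sublist p.edges ∧
      ∀ e ∈ q.edges, G.fst e ∉ X ∨ G.snd e ∉ X := by
  induction p with
  | nil => exact ⟨_, hy, nil _, List.nil_sublist _, by simp⟩
  | @cons a b c e h p ih =>
    by_cases ha : a ∈ X
    · exact ⟨a, ha, nil _, List.nil_sublist _, by simp⟩
    obtain ⟨w, hw, q, hqp, hqX⟩ := ih hy
    refine ⟨w, hw, cons e h q, hqp.cons_cons e, ?_⟩
    simp only [edges_cons, List.mem_cons, forall_eq_or_imp]
    refine ⟨?_, hqX⟩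
    rcases h.inc_left with h | h
    exacts [.inl (h ▸ ha), .inr (h ▸ ha)]

namespace ReachableIn

variable {P : G.E → Prop}

theorem refl (x : G.V) : G.ReachableIn P x x := ⟨.nil x, by simp⟩

theorem trans (h₁ : G.ReachableIn P x y) (h₂ : G.ReachableIn P y z) :
    G.ReachableIn P x z := by
  obtain ⟨p, hp⟩ := h₁
  obtain ⟨q, hq⟩ := h₂
  exact ⟨p.append q, by simpa [or_imp, forall_and] using And.intro hp hq⟩

theorem symm (h : G.ReachableIn P x y) : G.ReachableIn P y x := by
  obtain ⟨p, hp⟩ := h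
  exact ⟨p.reverse, by simpa using hp⟩

theorem exists_support_nodup (h : G.ReachableIn P x y) :
    ∃ p : G.Walk x y, p.support.Nodup ∧ ∀ e ∈ p.edges, P e := by
  obtain ⟨p, hp⟩ := h
  obtain ⟨q, hq, hqp⟩ := p.exists_support_nodup
  exact ⟨q, hq, fun e he => hp e (hqp he)⟩

end ReachableIn

theorem Walk.reachableIn_of_mem_support {P : G.E → Prop} (p : G.Walk x y)
    (hp : ∀ e ∈ p.edges, P e) {v : G.V} (hv : v ∈ p.support) : G.ReachableIn P x v := by
  obtain ⟨q, r, he, -⟩ := p.exists_split_of_mem_support hv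
  exact ⟨q, fun e hq => hp e (by simp [he, hq])⟩

/-- The vertices `P`-reachable from `x` form a set that no `P`-edge leaves. -/
theorem reachableIn_of_forall_cut {P : G.E → Prop}
    (h : ∀ A : Finset G.V, x ∈ A → y ∉ A → ∃ e ∈ G.cut A, P e) : G.ReachableIn P x y := by
  classical
  by_contra hxy
  obtain ⟨e, he, hPe⟩ := h (Finset.univ.filter (G.ReachableIn P x)) (by simpa using .refl x)
    (by simpa using hxy)
  have hreach : ∀ {a b}, G.Joins e a b → G.ReachableIn P x a → G.ReachableIn P x b :=
    fun hj ha => ha.trans ⟨.cons e hj (.nil _), by simpa using hPe⟩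
  rcases mem_cut.mp he with ⟨h₁, h₂⟩ | ⟨h₁, h₂⟩ <;> simp only [Finset.mem_filter,
    Finset.mem_univ, true_and] at h₁ h₂
  exacts [h₂ (hreach (.inl ⟨rfl, rfl⟩) h₁), h₁ (hreach (.inr ⟨rfl, rfl⟩) h₂)]

end Reachability

section TrailPairs

variable {F : Finset G.E} {x y v : G.V}

theorem twoEDP_iff : G.TwoEDP F x y ↔ ∃ p q : G.Walk x y,
    (p.edges ++ q.edges).Nodup ∧ ∀ e ∈ p.edges ++ q.edges, e ∈ F := by
  simp only [TwoEDP, List.nodup_append, List.mem_append, or_imp, forall_and]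
  refine exists₂_congr fun p q => ⟨?_, ?_⟩
  · rintro ⟨hp, hq, hpq, hpF, hqF⟩
    exact ⟨⟨hp, hq, fun e he f hf hef => hpq e he (hef ▸ hf)⟩, hpF, hqF⟩
  · rintro ⟨⟨hp, hq, hpq⟩, hpF, hqF⟩
    exact ⟨hp, hq, fun e he hq => hpq e he e hq rfl, hpF, hqF⟩

theorem twoEDP_self (F : Finset G.E) (x : G.V) : G.TwoEDP F x x :=
  twoEDP_iff.mpr ⟨.nil x, .nil x, by simp, by simp⟩

theorem twoEDP_of_subperm (p q : G.Walk x y) {l : List G.E}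
    (h : (p.edges ++ q.edges).Subperm l) (hl : l.Nodup) (hF : ∀ e ∈ l, e ∈ F) :
    G.TwoEDP F x y := by
  obtain ⟨l', hl', hsub⟩ := h
  exact twoEDP_iff.mpr ⟨p, q, hl'.nodup_iff.mp (hl.sublist hsub),
    fun e he => hF e (hsub.subset (hl'.mem_iff.mpr he))⟩

section Extend

variable {e : G.E} {p q : G.Walk y v}

/-- Cut the trail through `e` at `e` and exchange the pieces. -/
theorem twoEDP_of_mem_edges (hpq : (p.edges ++ q.edges).Nodup)
    (hF : ∀ f ∈ p.edges ++ q.edges, f ∈ F) (hj : G.Joins e x y) (he : e ∈ p.edges) :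
    G.TwoEDP F x v := by
  rcases p.exists_split_of_mem_edges he hj with ⟨r₁, r₂, hp⟩ | ⟨r₁, r₂, hp⟩
  · refine twoEDP_of_subperm (.cons e hj r₂) (r₁.reverse.append q) ?_ hpq hF
    rw [hp, List.subperm_ext_iff]
    intro f _
    simp only [Walk.edges_cons, Walk.edges_append, Walk.edges_reverse, List.cons_append,
      List.count_cons, List.count_append, List.count_reverse, beq_iff_eq, List.append_assoc]
    omega
  · refine twoEDP_of_subperm r₂ (.cons e hj q) ?_ hpq hF
    rw [hp, List.subperm_ext_iff]
    intro f _
    simp only [Walk.edges_cons, List.count_append, List.count_cons, beq_iff_eq,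
      List.append_assoc, List.cons_append]
    omega

/-- The new trails are `r` followed by `p` from `w` on, and `e` followed by `q`. -/
theorem twoEDP_of_detour (hpq : (p.edges ++ q.edges).Nodup)
    (hF : ∀ f ∈ p.edges ++ q.edges, f ∈ F) (hj : G.Joins e x y) (heF : e ∈ F)
    (he : e ∉ p.edges ++ q.edges) {w : G.V} (hw : w ∈ p.support) (r : G.Walk x w)
    (hr : r.edges.Nodup) (hrF : ∀ f ∈ r.edges, f ∈ F) (hre : e ∉ r.edges)
    (hrpq : ∀ f ∈ r.edges, f ∉ p.edges ++ q.edges) : G.TwoEDP F x v := by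
  obtain ⟨p₁, p₂, hp, -⟩ := p.exists_split_of_mem_support hw
  refine twoEDP_of_subperm (r.append p₂) (.cons e hj q)
    (l := r.edges ++ e :: (p.edges ++ q.edges)) ?_ ?_ ?_
  · rw [hp, List.subperm_ext_iff]
    intro f _
    simp only [Walk.edges_append, Walk.edges_cons, List.append_assoc, List.count_append,
      List.count_cons, beq_iff_eq]
    omega
  · refine List.nodup_append.mpr ⟨hr, List.nodup_cons.mpr ⟨he, hpq⟩, ?_⟩
    rintro f hf f' hf' rfl
    rcases List.mem_cons.mp hf' with rfl | hf'
    exacts [hre hf, hrpq f hf hf']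
  · simp only [List.mem_append, List.mem_cons]
    rintro f (hf | rfl | hf)
    exacts [hrF f hf, heF, hF f (List.mem_append.mpr hf)]

end Extend

theorem TwoEDP.cons {e : G.E} (h : G.TwoEDP F y v) (hj : G.Joins e x y) (heF : e ∈ F)
    (hr : G.ReachableIn (fun f => f ∈ F ∧ f ≠ e) x v) : G.TwoEDP F x v := by
  obtain ⟨p, q, hpq, hF⟩ := twoEDP_iff.mp h
  have hqp : (q.edges ++ p.edges).Nodup := List.nodup_append_comm.mp hpq
  have hF' : ∀ f ∈ q.edges ++ p.edges, f ∈ F := fun f hf =>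
    hF f (List.perm_append_comm.mem_iff.mp hf)
  by_cases hep : e ∈ p.edges
  · exact twoEDP_of_mem_edges hpq hF hj hep
  by_cases heq : e ∈ q.edges
  · exact twoEDP_of_mem_edges hqp hF' hj heq
  have he : e ∉ p.edges ++ q.edges := by simp [hep, heq]
  obtain ⟨r₀, hr₀, hr₀F⟩ := hr.exists_support_nodup
  obtain ⟨w, hw, r, hrr₀, hrX⟩ :=
    r₀.exists_prefix_until_mem (X := {t | t ∈ p.support ∨ t ∈ q.support}) (.inl p.end_mem_support)
  have hr : r.edges.Nodup := (Walk.edges_nodup_of_support_nodup hr₀).sublist hrr₀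
  have hrF : ∀ f ∈ r.edges, f ∈ F ∧ f ≠ e := fun f hf => hr₀F f (hrr₀.subset hf)
  -- every edge of `r` has an end off `p` and `q`, while both ends of their edges lie on them
  have hrpq : ∀ f ∈ r.edges, f ∉ p.edges ++ q.edges := by
    intro f hf hfpq
    rcases List.mem_append.mp hfpq with hfp | hfq
    · exact (hrX f hf).elim (· (.inl (p.fst_mem_support hfp))) (· (.inl (p.snd_mem_support hfp)))
    · exact (hrX f hf).elim (· (.inr (q.fst_mem_support hfq))) (· (.inr (q.snd_mem_support hfq)))
  rcases hw with hw | hw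
  · exact twoEDP_of_detour hpq hF hj heF he hw r hr (fun f hf => (hrF f hf).1)
      (fun h => (hrF e h).2 rfl) hrpq
  · exact twoEDP_of_detour hqp hF' hj heF (by simp [hep, heq]) hw r hr
      (fun f hf => (hrF f hf).1) (fun h => (hrF e h).2 rfl)
      (fun f hf h => hrpq f hf (List.perm_append_comm.mem_iff.mp h))

/-- Menger's theorem for two edge-disjoint trails: peel the first edge `e = xz` of an
`x`-`y` trail; the rest of the trail supplies a second crossing edge for every cut
separating `z` from `y` but not `x`. -/
theorem twoEDP_of_two_le_card_cut
    (h : ∀ A : Finset G.V, x ∈ A → y ∉ A → 2 ≤ (G.cut A ∩ F).card) : G.TwoEDP F x y := by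
  have hreach : ∀ {x} (e : G.E), (∀ A : Finset G.V, x ∈ A → y ∉ A → 2 ≤ (G.cut A ∩ F).card) →
      G.ReachableIn (fun f => f ∈ F ∧ f ≠ e) x y := fun e h =>
    reachableIn_of_forall_cut fun A hx hy => by
      obtain ⟨f, hf, hfe⟩ := Finset.exists_mem_ne (h A hx hy) e
      exact ⟨f, (Finset.mem_inter.mp hf).1, (Finset.mem_inter.mp hf).2, hfe⟩
  obtain ⟨p, hp, hpF⟩ := ReachableIn.exists_support_nodup <|
    reachableIn_of_forall_cut (P := (· ∈ F)) fun A hx hy => by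
      obtain ⟨f, hf⟩ := Finset.card_pos.mp (lt_of_lt_of_le two_pos (h A hx hy))
      exact ⟨f, (Finset.mem_inter.mp hf).1, (Finset.mem_inter.mp hf).2⟩
  replace hp := Walk.edges_nodup_of_support_nodup hp
  induction p with
  | nil => exact twoEDP_self F _
  | @cons x z y e hj p ih =>
    simp only [Walk.edges_cons, List.nodup_cons, List.mem_cons, forall_eq_or_imp] at hp hpF
    refine TwoEDP.cons (ih (fun A hz hy => ?_) hreach hpF.2 hp.2) hj hpF.1 (hreach e h)
    by_cases hx : x ∈ A
    · exact h A hx hy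
    obtain ⟨f, hf, hfA⟩ := p.exists_mem_cut hz hy
    refine Finset.one_lt_card.mpr ⟨e, ?_, f, ?_, fun hef => hp.1 (hef ▸ hf)⟩
    · exact Finset.mem_inter.mpr ⟨hj.symm.mem_cut hz hx, hpF.1⟩
    · exact Finset.mem_inter.mpr ⟨hfA, hpF.2 f hf⟩

end TrailPairs

section Degrees

variable {D F : Finset G.E} {e : G.E} {x y z v : G.V}

def incidence (e : G.E) (v : G.V) : ℕ :=
  (if G.fst e = v then 1 else 0) + (if G.snd e = v then 1 else 0)

theorem incidence_pos_iff : 0 < G.incidence e v ↔ G.Inc e v := by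
  unfold incidence Inc; split_ifs <;> simp_all

theorem Joins.incidence_eq (h : G.Joins e x y) (v : G.V) :
    G.incidence e v = (if x = v then 1 else 0) + (if y = v then 1 else 0) := by
  rcases h with ⟨rfl, rfl⟩ | ⟨rfl, rfl⟩ <;> simp only [incidence, add_comm]

theorem degIn_eq_sum (F : Finset G.E) (v : G.V) :
    G.degIn F v = ∑ e ∈ F, G.incidence e v := by
  simp only [degIn, incidence, Finset.card_filter, Finset.sum_add_distrib]

theorem degIn_mono (h : D ⊆ F) (v : G.V) : G.degIn D v ≤ G.degIn F v := by
  simpa only [degIn_eq_sum] using Finset.sum_le_sum_of_subset h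

theorem degIn_pos_iff : 0 < G.degIn F v ↔ ∃ e ∈ F, G.Inc e v := by
  simp only [degIn_eq_sum, Finset.sum_pos_iff, incidence_pos_iff]

theorem degIn_insert (he : e ∉ F) (v : G.V) :
    G.degIn (insert e F) v = G.incidence e v + G.degIn F v := by
  simp only [degIn_eq_sum, Finset.sum_insert he]

theorem mem_of_degIn_eq (hDF : D ⊆ F) (h : G.degIn D v = G.degIn F v) (he : e ∈ F)
    (hev : G.Inc e v) : e ∈ D := by
  by_contra heD
  have := Finset.sum_lt_sum_of_subset (f := (G.incidence · v)) hDF he heD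
    (incidence_pos_iff.mpr hev) fun _ _ _ => Nat.zero_le _
  simp only [degIn_eq_sum] at h
  omega

def Walk.degree (p : G.Walk x y) (v : G.V) : ℕ :=
  (p.edges.map (G.incidence · v)).sum

namespace Walk

@[simp] theorem degree_nil (v : G.V) : (nil x : G.Walk x x).degree v = 0 := rfl

theorem degree_cons (h : G.Joins e x y) (p : G.Walk y z) (v : G.V) :
    (cons e h p).degree v = G.incidence e v + p.degree v := by
  simp [degree]

theorem even_degree_add (p : G.Walk x y) (v : G.V) :
    Even (p.degree v + (if x = v then 1 else 0) + (if y = v then 1 else 0)) := by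
  induction p with
  | nil w => by_cases h : w = v <;> simp [h]
  | cons e h p ih =>
    rw [degree_cons, h.incidence_eq, Nat.even_iff] at *
    omega

theorem degree_add_of_support_nodup {p : G.Walk x y} (hp : p.support.Nodup) (v : G.V) :
    p.degree v + (if x = v then 1 else 0) + (if y = v then 1 else 0) =
      2 * (if v ∈ p.support then 1 else 0) := by
  induction p with
  | nil w => by_cases h : w = v <;> simp [h, Ne.symm]
  | @cons x z y e h p ih =>
    simp only [support_cons, List.nodup_cons] at hp
    have := ih hp.2
    rw [degree_cons, h.incidence_eq]
    by_cases hxv : x = v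
    · subst hxv
      have hz : z ≠ x := fun hz => hp.1 (hz ▸ p.start_mem_support)
      have hy : y ≠ x := fun hy => hp.1 (hy ▸ p.end_mem_support)
      simp only [hp.1, hz, hy, if_false, if_true, support_cons, List.mem_cons_self] at this ⊢
      omega
    · simp only [hxv, if_false, support_cons, List.mem_cons, Ne.symm hxv, false_or] at this ⊢
      omega

theorem degIn_toFinset_edges {p : G.Walk x y} (hp : p.edges.Nodup) (v : G.V) :
    G.degIn p.edges.toFinset v = p.degree v := by
  rw [degIn_eq_sum, List.sum_toFinset _ hp, degree]

end Walk

theorem even_degIn_of_nodup_append {p q : G.Walk x y} (hpq : (p.edges ++ q.edges).Nodup)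
    (v : G.V) : Even (G.degIn (p.edges ++ q.edges).toFinset v) := by
  have hp := p.even_degree_add v
  have hq := q.even_degree_add v
  rw [degIn_eq_sum, List.sum_toFinset _ hpq, List.map_append, List.sum_append]
  simp only [Walk.degree, Nat.even_iff] at *
  omega

end Degrees

section Cycles

variable {D F : Finset G.E} {e : G.E} {x y : G.V}

theorem isCycleEdges_insert_edges {p : G.Walk x y} (hp : p.support.Nodup)
    (hj : G.Joins e x y) (he : e ∉ p.edges) : G.IsCycleEdges (insert e p.edges.toFinset) := by
  have hdeg : ∀ v, G.degIn (insert e p.edges.toFinset) v =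
      2 * (if v ∈ p.support then 1 else 0) := fun v => by
    rw [degIn_insert (by simpa using he), hj.incidence_eq,
      Walk.degIn_toFinset_edges (Walk.edges_nodup_of_support_nodup hp),
      ← p.degree_add_of_support_nodup hp v]
    omega
  have hreach : ∀ v, 0 < G.degIn (insert e p.edges.toFinset) v →
      G.ReachableIn (· ∈ insert e p.edges.toFinset) x v := fun v hv =>
    p.reachableIn_of_mem_support (fun f hf => by simp [hf])
      (by by_contra h; simp [hdeg, h] at hv)
  refine ⟨Finset.insert_nonempty _ _, fun v => ?_, fun u w hu hw =>
    (hreach u hu).symm.trans (hreach w hw)⟩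
  rw [hdeg]
  split_ifs <;> simp

/-- Positive degree in `D` forces full degree `2`, so `D` contains both cycle edges at each
of its vertices; this propagates around the cycle. -/
theorem IsCycleEdges.eq_of_even_degIn (hF : G.IsCycleEdges F) (hDF : D ⊆ F)
    (hD : D.Nonempty) (heven : ∀ v, Even (G.degIn D v)) : D = F := by
  have hfull : ∀ {v}, 0 < G.degIn D v → G.degIn D v = G.degIn F v := fun {v} hv => by
    have hle := degIn_mono hDF v
    have hev := Nat.even_iff.mp (heven v)
    rcases hF.2.1 v with h | h <;> omega
  have hprop : ∀ {u w} (p : G.Walk u w), (∀ f ∈ p.edges, f ∈ F) →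
      0 < G.degIn D u → 0 < G.degIn D w := by
    intro u w p
    induction p with
    | nil => exact fun _ h => h
    | cons f hj p ih =>
      simp only [Walk.edges_cons, List.mem_cons, forall_eq_or_imp]
      refine fun hpF hu => ih hpF.2 (degIn_pos_iff.mpr ⟨f, ?_, hj.symm.inc_left⟩)
      exact mem_of_degIn_eq hDF (hfull hu) hpF.1 hj.inc_left
  obtain ⟨e, he⟩ := hD
  have hu : 0 < G.degIn D (G.fst e) := degIn_pos_iff.mpr ⟨e, he, .inl rfl⟩
  refine subset_antisymm hDF fun f hf => ?_
  obtain ⟨p, hp⟩ := hF.2.2 _ (G.fst f) (hu.trans_le (degIn_mono hDF _))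
    (degIn_pos_iff.mpr ⟨f, hf, .inl rfl⟩)
  exact mem_of_degIn_eq hDF (hfull (hprop p hp hu)) hf (.inl rfl)

theorem TwoEDP.exists_even_subset (h : G.TwoEDP F x y) (hxy : x ≠ y) :
    ∃ D ⊆ F, (∀ v, Even (G.degIn D v)) ∧ 0 < G.degIn D x ∧ 0 < G.degIn D y := by
  obtain ⟨p, q, hpq, hF⟩ := twoEDP_iff.mp h
  have hpD : G.degIn p.edges.toFinset ≤ G.degIn (p.edges ++ q.edges).toFinset :=
    degIn_mono (by rw [List.toFinset_append]; exact Finset.subset_union_left)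
  have hp := Walk.degIn_toFinset_edges hpq.of_append_left (p := p)
  have hx : (p.degree x + 1) % 2 = 0 := by
    simpa [hxy.symm] using Nat.even_iff.mp (p.even_degree_add x)
  have hy : (p.degree y + 1) % 2 = 0 := by
    simpa [hxy] using Nat.even_iff.mp (p.even_degree_add y)
  refine ⟨_, fun e he => hF e (List.mem_toFinset.mp he), even_degIn_of_nodup_append hpq,
    ?_, ?_⟩
  · exact lt_of_lt_of_le (by omega) ((hp x).symm.trans_le (hpD x))
  · exact lt_of_lt_of_le (by omega) ((hp y).symm.trans_le (hpD y))

/-- Minimality: two edge-disjoint `x`-`y` trails form a nonempty even subgraph of the cycle,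
hence all of it. -/
theorem IsCycleEdges.isChain (hF : G.IsCycleEdges F) (hxy : x ≠ y) (h : G.TwoEDP F x y) :
    G.IsChain (Finset.univ.filter (0 < G.degIn F ·)) F x y := by
  have hS : ∀ {v}, v ∈ Finset.univ.filter (0 < G.degIn F ·) ↔ ∃ e ∈ F, G.Inc e v := by
    simp [degIn_pos_iff]
  obtain ⟨D, hDF, -, hDx, hDy⟩ := h.exists_even_subset hxy
  refine ⟨hS.mpr (degIn_pos_iff.mp (hDx.trans_le (degIn_mono hDF x))),
    hS.mpr (degIn_pos_iff.mp (hDy.trans_le (degIn_mono hDF y))),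
    fun e he => ⟨hS.mpr ⟨e, he, .inl rfl⟩, hS.mpr ⟨e, he, .inr rfl⟩⟩, h, ?_⟩
  rintro S' hS' F' hF' - - hcl h'
  obtain ⟨D', hD'F', heven, hD'x, -⟩ := h'.exists_even_subset hxy
  have hD' : D' = F := hF.eq_of_even_degIn (hD'F'.trans hF')
    (degIn_pos_iff.mp hD'x |>.imp fun e he => he.1) heven
  have hF'F : F' = F := subset_antisymm hF' (hD' ▸ hD'F')
  refine ⟨subset_antisymm hS' fun v hv => ?_, hF'F⟩
  obtain ⟨e, he, hev⟩ := hS.mp hv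
  rcases hev with rfl | rfl
  exacts [(hcl e (hF'F ▸ he)).1, (hcl e (hF'F ▸ he)).2]

end Cycles

section Chains

variable {x y : G.V}

theorem exists_isChain_subset {S₀ : Finset G.V} {F₀ : Finset G.E} (hx : x ∈ S₀) (hy : y ∈ S₀)
    (hcl : ∀ e ∈ F₀, G.fst e ∈ S₀ ∧ G.snd e ∈ S₀) (h : G.TwoEDP F₀ x y) :
    ∃ S ⊆ S₀, ∃ F ⊆ F₀, G.IsChain S F x y := by
  classical
  let P : Finset G.V × Finset G.E → Prop := fun c =>
    x ∈ c.1 ∧ y ∈ c.1 ∧ (∀ e ∈ c.2, G.fst e ∈ c.1 ∧ G.snd e ∈ c.1) ∧ G.TwoEDP c.2 x y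
  obtain ⟨⟨S, F⟩, hmem, hmin⟩ := Finset.exists_min_image
    ((S₀.powerset ×ˢ F₀.powerset).filter P) (fun c => c.1.card + c.2.card)
    ⟨(S₀, F₀), Finset.mem_filter.mpr ⟨Finset.mem_product.mpr
      ⟨Finset.mem_powerset_self _, Finset.mem_powerset_self _⟩, hx, hy, hcl, h⟩⟩
  simp only [P, Finset.mem_filter, Finset.mem_product, Finset.mem_powerset] at hmem hmin
  obtain ⟨⟨hS, hF⟩, hxS, hyS, hclS, hSF⟩ := hmem
  refine ⟨S, hS, F, hF, hxS, hyS, hclS, hSF, fun S' hS' F' hF' hx' hy' hcl' h' => ?_⟩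
  have hcard := hmin (S', F') ⟨⟨hS'.trans hS, hF'.trans hF⟩, hx', hy', hcl', h'⟩
  have := Finset.card_le_card hS'
  have := Finset.card_le_card hF'
  exact ⟨Finset.eq_of_subset_of_card_le hS' (by simp only at hcard; omega),
    Finset.eq_of_subset_of_card_le hF' (by simp only at hcard; omega)⟩

/-- No single edge separates the ends of an edge `e`, so a path joins them avoiding `e`. -/
theorem exists_isChain_isCycleEdges (h : G.EdgeConnected 3) :
    ∃ (S : Finset G.V) (F : Finset G.E) (x y : G.V), G.IsChain S F x y ∧ G.IsCycleEdges F := by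
  obtain ⟨hcard, hcut⟩ := h
  obtain ⟨a, b, hab⟩ := Fintype.exists_pair_of_one_lt_card hcard
  obtain ⟨e, he⟩ := Finset.card_pos.mp <| lt_of_lt_of_le three_pos <|
    hcut {a} (Finset.singleton_nonempty a) fun h =>
      hab (Finset.mem_singleton.mp (h ▸ Finset.mem_univ b : b ∈ ({a} : Finset G.V))).symm
  have hxy : G.fst e ≠ G.snd e := by
    rcases mem_cut.mp he with ⟨h₁, h₂⟩ | ⟨h₁, h₂⟩ <;> rintro h <;> simp_all
  have hj : G.Joins e (G.fst e) (G.snd e) := .inl ⟨rfl, rfl⟩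
  obtain ⟨p, hp, hpe⟩ := ReachableIn.exists_support_nodup <|
    reachableIn_of_forall_cut (P := (· ≠ e)) (x := G.fst e) (y := G.snd e) fun A hx hy =>
      Finset.exists_mem_ne (lt_of_lt_of_le (by norm_num)
        (hcut A ⟨_, hx⟩ fun h => hy (h ▸ Finset.mem_univ _))) e
  have hep : e ∉ p.edges := fun h => hpe e h rfl
  have hF := isCycleEdges_insert_edges hp hj hep
  refine ⟨_, _, _, _, hF.isChain hxy (twoEDP_iff.mpr ⟨p, .cons e hj (.nil _), ?_, ?_⟩), hF⟩
  · exact List.nodup_append.mpr ⟨Walk.edges_nodup_of_support_nodup hp, List.nodup_singleton e,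
      fun f hf g hg hfg => hpe f hf (hfg.trans (List.mem_singleton.mp hg))⟩
  · simp [or_comm]

end Chains

section Extension

variable {x y : G.V}

def innerEdges (A : Finset G.V) : Finset G.E :=
  Finset.univ.filter fun e => G.fst e ∈ A ∧ G.snd e ∈ A

theorem mem_innerEdges {A : Finset G.V} {e : G.E} :
    e ∈ G.innerEdges A ↔ G.fst e ∈ A ∧ G.snd e ∈ A := by
  simp [innerEdges]

/-- Splitting `A` into `D` and `A \ D`: an edge crossing `D` or `A \ D` either crosses `A` or
joins `D` to `A \ D`, and only the latter cross both. -/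
theorem card_cut_inter_add_card_cut_sdiff_inter_le {A D : Finset G.V} (hDA : D ⊆ A)
    (O : Finset G.E) :
    (G.cut D ∩ O).card + (G.cut (A \ D) ∩ O).card ≤
      (G.cut A ∩ O).card + 2 * (G.cut D ∩ G.innerEdges A).card := by
  have hunion : G.cut D ∩ O ∪ G.cut (A \ D) ∩ O ⊆ G.cut A ∩ O ∪ G.cut D ∩ G.innerEdges A := by
    intro e
    have := @hDA (G.fst e)
    have := @hDA (G.snd e)
    simp only [Finset.mem_union, Finset.mem_inter, Finset.mem_sdiff, mem_cut, mem_innerEdges]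
    tauto
  have hinter : G.cut D ∩ O ∩ (G.cut (A \ D) ∩ O) ⊆ G.cut D ∩ G.innerEdges A := by
    intro e
    have := @hDA (G.fst e)
    have := @hDA (G.snd e)
    simp only [Finset.mem_inter, Finset.mem_sdiff, mem_cut, mem_innerEdges]
    tauto
  have := Finset.card_union_add_card_inter (G.cut D ∩ O) (G.cut (A \ D) ∩ O)
  have := Finset.card_le_card hunion
  have := Finset.card_le_card hinter
  have := Finset.card_union_le (G.cut A ∩ O) (G.cut D ∩ G.innerEdges A)
  omega

/-- Otherwise, by `card_cut_inter_add_card_cut_sdiff_inter_le`, `D` or `A \ D` would be a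
smaller such set. -/
theorem two_le_card_cut_inter_innerEdges_of_minimal {U A D : Finset G.V}
    (hmin : ∀ B ⊆ U, B.Nonempty → (G.cut B ∩ G.innerEdges U).card ≤ 1 → A.card ≤ B.card)
    (hAU : A ⊆ U) (hA : (G.cut A ∩ G.innerEdges U).card ≤ 1) (hDA : D ⊆ A) (hD : D.Nonempty)
    (hDA' : D ≠ A) : 2 ≤ (G.cut D ∩ G.innerEdges A).card := by
  by_contra hlt
  have hsum := card_cut_inter_add_card_cut_sdiff_inter_le hDA (G.innerEdges U)
  have hD' : (A \ D).Nonempty := Finset.sdiff_nonempty.mpr fun h => hDA' (subset_antisymm hDA h)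
  have hDlt : D.card < A.card := Finset.card_lt_card (hDA.ssubset_of_ne hDA')
  have hD'lt : (A \ D).card < A.card := Finset.card_lt_card (Finset.sdiff_ssubset hDA hD)
  rcases le_or_gt (G.cut D ∩ G.innerEdges U).card 1 with h | h
  · have := hmin D (hDA.trans hAU) hD h
    omega
  · have := hmin (A \ D) (Finset.sdiff_subset.trans hAU) hD' (by omega)
    omega

theorem twoEDP_innerEdges {A : Finset G.V}
    (h : ∀ D ⊆ A, D.Nonempty → D ≠ A → 2 ≤ (G.cut D ∩ G.innerEdges A).card)
    (hx : x ∈ A) (hy : y ∈ A) : G.TwoEDP (G.innerEdges A) x y := by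
  refine twoEDP_of_two_le_card_cut fun B hxB hyB => ?_
  have hsub : G.cut (B ∩ A) ∩ G.innerEdges A ⊆ G.cut B ∩ G.innerEdges A := by
    intro e
    simp only [Finset.mem_inter, mem_cut, mem_innerEdges]
    tauto
  refine le_trans (h (B ∩ A) Finset.inter_subset_right ⟨x, Finset.mem_inter.mpr ⟨hxB, hx⟩⟩
    fun hBA => hyB ?_) (Finset.card_le_card hsub)
  exact (Finset.mem_inter.mp (by rw [hBA]; exact hy : y ∈ B ∩ A)).1

theorem exists_joins_of_mem_cut {A W : Finset G.V} (hAW : A ⊆ Wᶜ) {e : G.E}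
    (he : e ∈ G.cut A) (heW : e ∉ G.innerEdges Wᶜ) : ∃ a ∈ A, ∃ w ∈ W, G.Joins e a w := by
  rw [mem_innerEdges, Finset.mem_compl, Finset.mem_compl, not_and_or, not_not, not_not] at heW
  rcases mem_cut.mp he with ⟨h₁, h₂⟩ | ⟨h₁, h₂⟩
  · exact ⟨_, h₁, _, heW.resolve_left (Finset.mem_compl.mp (hAW h₁)), .inl ⟨rfl, rfl⟩⟩
  · exact ⟨_, h₂, _, heW.resolve_right (Finset.mem_compl.mp (hAW h₂)), .inr ⟨rfl, rfl⟩⟩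

structure AnchoredChain (G : Multigraph) (W : Finset G.V) where
  S : Finset G.V
  F : Finset G.E
  u : G.V
  v : G.V
  anchor₁ : G.E
  anchor₂ : G.E
  isChain : G.IsChain S F u v
  disjoint : Disjoint S W
  anchor₁_ne_anchor₂ : anchor₁ ≠ anchor₂
  joins₁ : ∃ x ∈ W, G.Joins anchor₁ u x
  joins₂ : ∃ y ∈ W, G.Joins anchor₂ v y

theorem nonempty_anchoredChain (h : G.EdgeConnected 3) {W : Finset G.V} (hW : W.Nonempty)
    (hWu : W ≠ Finset.univ) : Nonempty (G.AnchoredChain W) := by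
  let good : Finset G.V → Prop := fun B => B.Nonempty ∧ (G.cut B ∩ G.innerEdges Wᶜ).card ≤ 1
  have hWc : good Wᶜ := by
    refine ⟨Finset.nonempty_iff_ne_empty.mpr (by rwa [Ne, Finset.compl_eq_empty_iff]), ?_⟩
    have : G.cut Wᶜ ∩ G.innerEdges Wᶜ = ∅ := by
      ext e
      simp only [Finset.mem_inter, mem_cut, mem_innerEdges, Finset.notMem_empty, iff_false]
      tauto
    simp [this]
  obtain ⟨A, hA, hAmin⟩ := Finset.exists_min_image (Wᶜ.powerset.filter good) Finset.card
    ⟨Wᶜ, Finset.mem_filter.mpr ⟨Finset.mem_powerset_self _, hWc⟩⟩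
  simp only [good, Finset.mem_filter, Finset.mem_powerset, and_imp] at hA hAmin
  obtain ⟨hAW, hA, hA1⟩ := hA
  have hAu : A ≠ Finset.univ := fun hAu => by
    obtain ⟨w, hw⟩ := hW
    exact Finset.mem_compl.mp (hAW (hAu ▸ Finset.mem_univ w)) hw
  have hanchors : 1 < (G.cut A \ G.innerEdges Wᶜ).card := by
    have := Finset.card_sdiff_add_card_inter (G.cut A) (G.innerEdges Wᶜ)
    have := h.2 A hA hAu
    omega
  obtain ⟨e₁, he₁, e₂, he₂, hne⟩ := Finset.one_lt_card.mp hanchors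
  rw [Finset.mem_sdiff] at he₁ he₂
  obtain ⟨a, ha, x, hx, hj₁⟩ := exists_joins_of_mem_cut hAW he₁.1 he₁.2
  obtain ⟨b, hb, y, hy, hj₂⟩ := exists_joins_of_mem_cut hAW he₂.1 he₂.2
  have h2 := twoEDP_innerEdges
    (fun D hDA hD hDA' => two_le_card_cut_inter_innerEdges_of_minimal
      (fun B hB hB' hB1 => hAmin B hB hB' hB1) hAW hA1 hDA hD hDA') ha hb
  obtain ⟨S, hSA, F, -, hch⟩ :=
    exists_isChain_subset ha hb (fun e he => mem_innerEdges.mp he) h2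
  exact ⟨⟨S, F, a, b, e₁, e₂, hch, Finset.disjoint_of_subset_left (hSA.trans hAW)
    disjoint_compl_left, hne, ⟨x, hx, hj₁⟩, ⟨y, hy, hj₂⟩⟩⟩

end Extension

/-- `AnchoredChainCover` with `cover` replaced by: the chains cover exactly `W`. -/
structure PartialCover (G : Multigraph) (W : Finset G.V) where
  k : ℕ
  kpos : 0 < k
  S : Fin k → Finset G.V
  F : Fin k → Finset G.E
  endA : Fin k → G.V
  endB : Fin k → G.V
  anchor1 : Fin k → G.E
  anchor2 : Fin k → G.E
  chain : ∀ i : Fin k, G.IsChain (S i) (F i) (endA i) (endB i)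
  first_cycle : G.IsCycleEdges (F ⟨0, kpos⟩)
  disj : ∀ i j : Fin k, i ≠ j → Disjoint (S i) (S j)
  mem_iff : ∀ x : G.V, x ∈ W ↔ ∃ i : Fin k, x ∈ S i
  anchor_ne : ∀ i : Fin k, i ≠ ⟨0, kpos⟩ → anchor1 i ≠ anchor2 i
  anchor1_spec : ∀ i : Fin k, i ≠ ⟨0, kpos⟩ →
    ∃ x : G.V, G.Joins (anchor1 i) (endA i) x ∧ ∃ j : Fin k, j < i ∧ x ∈ S j
  anchor2_spec : ∀ i : Fin k, i ≠ ⟨0, kpos⟩ →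
    ∃ y : G.V, G.Joins (anchor2 i) (endB i) y ∧ ∃ j : Fin k, j < i ∧ y ∈ S j

namespace PartialCover

variable {W : Finset G.V}

theorem nonempty_of_isCycleEdges {S : Finset G.V} {F : Finset G.E} {a b : G.V}
    (hch : G.IsChain S F a b) (hF : G.IsCycleEdges F) : Nonempty (G.PartialCover S) := by
  obtain ⟨e, -⟩ := hF.1
  have h0 : ∀ i : Fin 1, i ≠ ⟨0, one_pos⟩ → False := fun i hi => hi (Subsingleton.elim _ _)
  exact ⟨⟨1, one_pos, fun _ => S, fun _ => F, fun _ => a, fun _ => b, fun _ => e, fun _ => e,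
    fun _ => hch, hF, fun i j hij => (hij (Subsingleton.elim i j)).elim,
    fun x => ⟨fun hx => ⟨0, hx⟩, fun ⟨_, hx⟩ => hx⟩,
    fun i hi => (h0 i hi).elim, fun i hi => (h0 i hi).elim, fun i hi => (h0 i hi).elim⟩⟩

theorem nonempty (c : G.PartialCover W) : W.Nonempty :=
  ⟨c.endA ⟨0, c.kpos⟩, (c.mem_iff _).mpr ⟨_, (c.chain _).1⟩⟩

theorem snoc_anchor_spec {k : ℕ} (hk : 0 < k) {S : Fin k → Finset G.V}
    (hS : ∀ x, x ∈ W ↔ ∃ i, x ∈ S i) (S' : Finset G.V) {e : Fin k → G.E} {u : Fin k → G.V}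
    {e' : G.E} {u' : G.V} (h : ∀ i : Fin k, i ≠ ⟨0, hk⟩ →
      ∃ x : G.V, G.Joins (e i) (u i) x ∧ ∃ j : Fin k, j < i ∧ x ∈ S j)
    (h' : ∃ x ∈ W, G.Joins e' u' x) (i : Fin (k + 1)) (hi : i ≠ ⟨0, k.succ_pos⟩) :
    ∃ x : G.V, G.Joins (Fin.snoc (α := fun _ => G.E) e e' i)
      (Fin.snoc (α := fun _ => G.V) u u' i) x ∧
      ∃ j : Fin (k + 1), j < i ∧ x ∈ Fin.snoc (α := fun _ => Finset G.V) S S' j := by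
  induction i using Fin.lastCases with
  | last =>
    obtain ⟨x, hx, hj⟩ := h'
    obtain ⟨j, hj'⟩ := (hS x).mp hx
    exact ⟨x, by simpa using hj, j.castSucc, Fin.castSucc_lt_last j, by simpa using hj'⟩
  | cast i =>
    obtain ⟨x, hj, j, hji, hx⟩ := h i fun h0 => hi (h0 ▸ rfl)
    exact ⟨x, by simpa using hj, j.castSucc, Fin.castSucc_lt_castSucc_iff.mpr hji,
      by simpa using hx⟩

def snoc (c : G.PartialCover W) (C : G.AnchoredChain W) : G.PartialCover (W ∪ C.S) where
  k := c.k + 1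
  kpos := c.k.succ_pos
  S := Fin.snoc c.S C.S
  F := Fin.snoc c.F C.F
  endA := Fin.snoc c.endA C.u
  endB := Fin.snoc c.endB C.v
  anchor1 := Fin.snoc c.anchor1 C.anchor₁
  anchor2 := Fin.snoc c.anchor2 C.anchor₂
  chain i := by
    induction i using Fin.lastCases with
    | last => simpa using C.isChain
    | cast i => simpa using c.chain i
  first_cycle := by simpa using (Fin.snoc_castSucc (α := fun _ => Finset G.E) C.F c.F
    ⟨0, c.kpos⟩).symm ▸ c.first_cycle
  disj i j hij := by
    have hW : ∀ i, Disjoint (c.S i) C.S := fun i => C.disjoint.symm.mono_left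
      fun x hx => (c.mem_iff x).mpr ⟨i, hx⟩
    induction i using Fin.lastCases with
    | last =>
      induction j using Fin.lastCases with
      | last => exact (hij rfl).elim
      | cast j => simpa using (hW j).symm
    | cast i =>
      induction j using Fin.lastCases with
      | last => simpa using hW i
      | cast j => simpa using c.disj i j fun h => hij (h ▸ rfl)
  mem_iff x := by simp [Fin.exists_fin_succ', c.mem_iff]
  anchor_ne i hi := by
    induction i using Fin.lastCases with
    | last => simpa using C.anchor₁_ne_anchor₂
    | cast i => simpa using c.anchor_ne i fun h0 => hi (h0 ▸ rfl)
  anchor1_spec := snoc_anchor_spec c.kpos c.mem_iff C.S c.anchor1_spec C.joins₁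
  anchor2_spec := snoc_anchor_spec c.kpos c.mem_iff C.S c.anchor2_spec C.joins₂

theorem nonempty_univ (h : G.EdgeConnected 3) {W : Finset G.V} (c : G.PartialCover W) :
    Nonempty (G.PartialCover Finset.univ) := by
  by_cases hW : W = Finset.univ
  · exact hW ▸ ⟨c⟩
  obtain ⟨C⟩ := nonempty_anchoredChain h c.nonempty hW
  have : (W ∪ C.S)ᶜ.card < Wᶜ.card := by
    have hu : C.u ∉ W := Finset.disjoint_left.mp C.disjoint C.isChain.1
    have := Finset.card_lt_card (Finset.ssubset_iff_of_subset Finset.subset_union_left |>.mpr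
      ⟨C.u, Finset.mem_union_right _ C.isChain.1, hu⟩)
    have := Finset.card_le_univ (W ∪ C.S)
    simp only [Finset.card_compl]
    omega
  exact (c.snoc C).nonempty_univ h
termination_by Wᶜ.card
decreasing_by exact this

def toAnchoredChainCover (c : G.PartialCover Finset.univ) : G.AnchoredChainCover :=
  { c with cover := fun x => (c.mem_iff x).mp (Finset.mem_univ x) }

end PartialCover

end Multigraph

/-- Every 3-edge-connected graph contains an anchored chain
cover. -/
theorem stmt1 (G : Multigraph) (h : G.EdgeConnected 3) :
    Nonempty G.AnchoredChainCover := by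
  obtain ⟨S, F, x, y, hch, hF⟩ := Multigraph.exists_isChain_isCycleEdges h
  obtain ⟨c⟩ := Multigraph.PartialCover.nonempty_of_isCycleEdges hch hF
  obtain ⟨c⟩ := c.nonempty_univ h
  exact ⟨c.toAnchoredChainCover⟩
end

section
/- If G is a 4-edge-connected graph with n vertices, then G has at least 2^{n/250} nowhere-zero Z2×Z2-flows. -/
namespace Multigraph

variable (G : Multigraph)

/-- Kirchhoff's law at every vertex, with respect to the reference
orientation: the sum of the values on edges directed away from `v` equals the
sum on edges directed towards `v`. -/
def IsFlow {Γ : Type} [AddCommGroup Γ] (φ : G.E → Γ) : Prop :=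
  ∀ v : G.V,
    ∑ e ∈ Finset.univ.filter (fun e => G.fst e = v), φ e =
      ∑ e ∈ Finset.univ.filter (fun e => G.snd e = v), φ e

/-- A flow is nowhere-zero if its value is nonzero on every edge. -/
def NowhereZero {Γ : Type} [Zero Γ] (φ : G.E → Γ) : Prop :=
  ∀ e : G.E, φ e ≠ 0

end Multigraph

open Finset Submodule Module Function

lemma add_self_eq_zero_of_zmod_two {M : Type*} [AddCommGroup M] [Module (ZMod 2) M] (x : M) :
    x + x = 0 := by
  rw [← two_nsmul]; exact ZModModule.char_nsmul_eq_zero 2 x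

lemma linearIndependent_of_apply_eq_ite {R ι V : Type*} [Ring R] [Fintype ι] [DecidableEq ι]
    {u : ι → V → R} (σ : ι → V) (h : ∀ i j, u j (σ i) = if j = i then 1 else 0) :
    LinearIndependent R u :=
  Fintype.linearIndependent_iff.mpr fun g hg i => by
    simpa [Finset.sum_apply, h] using congrFun hg (σ i)

lemma sum_card_update {ι κ : Type*} [Fintype κ] [DecidableEq κ] (I : κ → Finset ι) (b : κ)
    (s : Finset ι) :
    ∑ c, #(update I b s c) + #(I b) = ∑ c, #(I c) + #s := by
  rw [Fintype.sum_eq_add_sum_compl b, Fintype.sum_eq_add_sum_compl b (fun c => #(I c)),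
    update_self, sum_congr rfl fun c hc => by rw [update_of_ne (by simpa using hc)]]
  ring

section Exchange

variable {K W ι : Type*} [DivisionRing K] [AddCommGroup W] [Module K W] {v : ι → W}

lemma span_image_le_of_forall_mem {s t : Finset ι}
    (h : ∀ i ∈ s, v i ∈ span K (v '' t)) : span K (v '' s) ≤ span K (v '' t) :=
  span_le.mpr <| by rintro _ ⟨i, hi, rfl⟩; exact h i hi

lemma LinearIndepOn.finrank_span_image {s : Finset ι} (hs : LinearIndepOn K v (s : Set ι)) :
    finrank K (span K (v '' s)) = #s := by
  have := finrank_span_eq_card hs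
  rw [← Set.image_eq_range] at this
  simpa using this

variable [DecidableEq ι] {s : Finset ι} {e f : ι}

lemma LinearIndepOn.exchange (hs : LinearIndepOn K v (s : Set ι))
    (he : v e ∈ span K (v '' s)) (hf : f ∈ s) (hef : v e ∉ span K (v '' (s.erase f))) :
    LinearIndepOn K v (insert e (s.erase f) : Finset ι) ∧
      span K (v '' (insert e (s.erase f) : Finset ι)) = span K (v '' s) ∧
      #(insert e (s.erase f)) = #s := by
  have he' : e ∉ s.erase f := fun h => hef (subset_span (Set.mem_image_of_mem v h))
  have hs' : v '' s = insert (v f) (v '' (s.erase f)) := by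
    rw [← Set.image_insert_eq, ← coe_insert, insert_erase hf]
  refine ⟨?_, ?_, by rw [card_insert_of_notMem he', card_erase_add_one hf]⟩
  · rw [coe_insert]
    exact (hs.mono (by simp)).insert hef
  · rw [hs'] at he ⊢
    have hfe := mem_span_insert_exchange he hef
    rw [coe_insert, Set.image_insert_eq, ← span_insert_eq_span (x := v f) hfe, Set.insert_comm,
      span_insert_eq_span he]

lemma LinearIndepOn.mem_span_image_sdiff (hs : LinearIndepOn K v (s : Set ι)) {x : W}
    (hx : x ∈ span K (v '' s)) {T : Finset ι} (hT : ∀ g ∈ T, x ∈ span K (v '' (s.erase g))) :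
    x ∈ span K (v '' (s \ T : Finset ι)) := by
  induction T using Finset.induction_on with
  | empty => simpa using hx
  | @insert g T hgT ih =>
    have hxT := ih fun g' hg' => hT g' (mem_insert_of_mem hg')
    by_cases hgs : g ∈ s
    swap
    · rwa [sdiff_insert_of_notMem hgs]
    by_contra hcon
    have hsT : s \ T = insert g (s \ insert g T) := by
      rw [sdiff_insert, insert_erase (mem_sdiff.mpr ⟨hgs, hgT⟩)]
    rw [hsT, coe_insert, Set.image_insert_eq] at hxT
    have hg : v g ∈ span K (v '' (s.erase g : Finset ι)) := by
      refine span_le.mpr ?_ (mem_span_insert_exchange hxT hcon)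
      rintro _ (rfl | ⟨i, hi, rfl⟩)
      · exact hT g (mem_insert_self g T)
      · refine subset_span (Set.mem_image_of_mem v ?_)
        simp only [coe_sdiff, coe_insert, Set.mem_sdiff, Set.mem_insert_iff, not_or] at hi
        simpa using ⟨hi.1, hi.2.1⟩
    exact linearIndepOn_iff_notMem_span.mp hs g hgs (by simpa using hg)

end Exchange

section IndepPacking

variable (K : Type*) {W ι κ : Type*} [DivisionRing K] [AddCommGroup W] [Module K W] (v : ι → W)

structure IsIndepPacking (I : κ → Finset ι) : Prop where
  pairwise_disjoint : Pairwise (Disjoint on I)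
  linearIndepOn : ∀ b, LinearIndepOn K v (I b : Set ι)

def Unused (I : κ → Finset ι) (e : ι) : Prop := ∀ b, e ∉ I b

def Extendable (I : κ → Finset ι) (g : ι) : Prop := ∃ b, g ∉ I b ∧ v g ∉ span K (v '' I b)

lemma isIndepPacking_empty : IsIndepPacking K v fun _ : κ => (∅ : Finset ι) :=
  ⟨fun _ _ _ => disjoint_empty_left _, fun _ => by simp⟩

variable [DecidableEq ι]

/-- `f` can be exchanged for `e` in `I b`: `insert e ((I b).erase f)` is again independent, with
the same span. -/
def ExchangeArcAt (I : κ → Finset ι) (b : κ) (e f : ι) : Prop :=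
  e ∉ I b ∧ v e ∈ span K (v '' I b) ∧ f ∈ I b ∧ v e ∉ span K (v '' (I b).erase f)

def ExchangeArc (I : κ → Finset ι) (e f : ι) : Prop := ∃ b, ExchangeArcAt K v I b e f

variable {K v} {I : κ → Finset ι} {b : κ} {e f : ι}

lemma ExchangeArc.not_unused {x y : ι} (h : ExchangeArc K v I x y) : ¬ Unused I y :=
  fun hy => let ⟨c, _, _, hyc, _⟩ := h; hy c hyc

lemma not_unused_of_mem_of_isChain {x : ι} {l : List ι}
    (hl : List.IsChain (ExchangeArc K v I) (x :: l)) {y : ι} (hy : y ∈ l) : ¬ Unused I y := by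
  induction l generalizing x with
  | nil => simp at hy
  | cons z l ih =>
    rw [List.isChain_cons_cons] at hl
    rcases List.mem_cons.mp hy with rfl | hy
    · exact hl.1.not_unused
    · exact ih hl.2 hy

variable [DecidableEq κ]

def exchangeAt (I : κ → Finset ι) (b : κ) (e f : ι) : κ → Finset ι :=
  update I b (insert e ((I b).erase f))

@[simp] lemma exchangeAt_self : exchangeAt I b e f b = insert e ((I b).erase f) := by
  simp [exchangeAt]

@[simp] lemma exchangeAt_of_ne {c : κ} (hc : c ≠ b) : exchangeAt I b e f c = I c := by
  simp [exchangeAt, hc]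

lemma IsIndepPacking.update_of_subset_insert (hI : IsIndepPacking K v I) {s : Finset ι}
    (hs : LinearIndepOn K v (s : Set ι)) (hsub : s ⊆ insert e (I b)) (he : Unused I e) :
    IsIndepPacking K v (update I b s) := by
  have hdisj : ∀ c ≠ b, Disjoint (I c) s := fun c hc =>
    disjoint_left.mpr fun x hxc hxs => by
      rcases mem_insert.mp (hsub hxs) with rfl | hxb
      · exact he c hxc
      · exact disjoint_left.mp (hI.pairwise_disjoint hc) hxc hxb
  refine ⟨fun c d hcd => ?_, fun c => ?_⟩
  · by_cases hc : c = b <;> by_cases hd : d = b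
    · exact absurd (hc.trans hd.symm) hcd
    · subst hc; simpa [onFun, hd] using (hdisj d hd).symm
    · subst hd; simpa [onFun, hc] using hdisj c hc
    · simpa [onFun, hc, hd] using hI.pairwise_disjoint hcd
  · rcases eq_or_ne c b with rfl | hc
    · simpa using hs
    · simpa [hc] using hI.linearIndepOn c

lemma IsIndepPacking.exists_sum_card_succ_of_extendable [Fintype κ]
    (hI : IsIndepPacking K v I) {g : ι} (hg : Unused I g) (hext : Extendable K v I g) :
    ∃ J : κ → Finset ι, IsIndepPacking K v J ∧ ∑ c, #(J c) = ∑ c, #(I c) + 1 := by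
  obtain ⟨b, hgb, hspan⟩ := hext
  refine ⟨update I b (insert g (I b)), hI.update_of_subset_insert ?_ subset_rfl hg, ?_⟩
  · rw [coe_insert]; exact (hI.linearIndepOn b).insert hspan
  · have := sum_card_update I b (insert g (I b))
    rw [card_insert_of_notMem hgb] at this
    omega

lemma IsIndepPacking.isIndepPacking_exchangeAt (hI : IsIndepPacking K v I) (he : Unused I e)
    (hef : ExchangeArcAt K v I b e f) : IsIndepPacking K v (exchangeAt I b e f) := by
  obtain ⟨-, hspan, hf, hns⟩ := hef
  exact hI.update_of_subset_insert ((hI.linearIndepOn b).exchange hspan hf hns).1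
    (insert_subset_insert _ (erase_subset _ _)) he

lemma IsIndepPacking.sum_card_exchangeAt [Fintype κ] (hI : IsIndepPacking K v I)
    (hef : ExchangeArcAt K v I b e f) : ∑ c, #(exchangeAt I b e f c) = ∑ c, #(I c) := by
  obtain ⟨-, hspan, hf, hns⟩ := hef
  have := sum_card_update I b (insert e ((I b).erase f))
  rw [((hI.linearIndepOn b).exchange hspan hf hns).2.2] at this
  rw [exchangeAt]
  omega

lemma IsIndepPacking.span_exchangeAt_self (hI : IsIndepPacking K v I)
    (hef : ExchangeArcAt K v I b e f) :
    span K (v '' (exchangeAt I b e f b : Finset ι)) = span K (v '' I b) := by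
  obtain ⟨-, hspan, hf, hns⟩ := hef
  simpa using ((hI.linearIndepOn b).exchange hspan hf hns).2.1

lemma IsIndepPacking.unused_exchangeAt (hI : IsIndepPacking K v I) (he : Unused I e)
    (hef : ExchangeArcAt K v I b e f) : Unused (exchangeAt I b e f) f := by
  intro c hfc
  rcases eq_or_ne c b with rfl | hc
  · have hfe : f = e := by simpa using hfc
    exact he c (hfe ▸ hef.2.2.1)
  · rw [exchangeAt_of_ne hc] at hfc
    exact disjoint_left.mp (hI.pairwise_disjoint hc) hfc hef.2.2.1

lemma IsIndepPacking.exchangeArc_exchangeAt (hI : IsIndepPacking K v I) (he : Unused I e)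
    (hef : ExchangeArcAt K v I b e f) {x y : ι} (hxy : ExchangeArc K v I x y) (hx : x ≠ e)
    (hy : ¬ ExchangeArc K v I e y) : ExchangeArc K v (exchangeAt I b e f) x y := by
  obtain ⟨c, hxc, hxspan, hyc, hxns⟩ := hxy
  refine ⟨c, ?_⟩
  rcases eq_or_ne c b with rfl | hc
  swap
  · rw [ExchangeArcAt, exchangeAt_of_ne hc]; exact ⟨hxc, hxspan, hyc, hxns⟩
  have hyf : y ≠ f := by rintro rfl; exact hy ⟨c, hef⟩
  have hey : v e ∈ span K (v '' (I c).erase y) := by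
    by_contra h; exact hy ⟨c, he c, hef.2.1, hyc, h⟩
  refine ⟨?_, ?_, ?_, fun h => hxns ?_⟩
  · rw [exchangeAt_self, mem_insert, mem_erase]; tauto
  · rwa [hI.span_exchangeAt_self hef]
  · exact exchangeAt_self (I := I) ▸ mem_insert_of_mem (mem_erase.mpr ⟨hyf, hyc⟩)
  · refine span_image_le_of_forall_mem (fun z hz => ?_) h
    simp only [exchangeAt_self, mem_erase, mem_insert] at hz
    rcases hz with ⟨hzy, rfl | hz⟩
    · exact hey
    · exact subset_span (Set.mem_image_of_mem v (mem_erase.mpr ⟨hzy, hz.2⟩))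

lemma IsIndepPacking.extendable_exchangeAt (hI : IsIndepPacking K v I)
    (hef : ExchangeArcAt K v I b e f) {g : ι} (hg : Extendable K v I g) (hge : g ≠ e) :
    Extendable K v (exchangeAt I b e f) g := by
  obtain ⟨c, hgc, hgns⟩ := hg
  refine ⟨c, ?_, ?_⟩
  · rcases eq_or_ne c b with rfl | hc
    · rw [exchangeAt_self, mem_insert, mem_erase]; tauto
    · rwa [exchangeAt_of_ne hc]
  · rcases eq_or_ne c b with rfl | hc
    · rwa [hI.span_exchangeAt_self hef]
    · rwa [exchangeAt_of_ne hc]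

/-- Augmenting along a chain of exchange arcs. Either `e` has an arc to a later element and the
chain can be shortened, or the chain is shortcut-free, and then exchanging along its first arc
leaves the rest of it a chain of exchange arcs. -/
theorem IsIndepPacking.exists_sum_card_succ [Fintype κ] {I : κ → Finset ι} {e : ι}
    (hI : IsIndepPacking K v I) (he : Unused I e) (l : List ι)
    (hl : List.IsChain (ExchangeArc K v I) (e :: l))
    (hext : Extendable K v I ((e :: l).getLast (List.cons_ne_nil e l))) :
    ∃ J : κ → Finset ι, IsIndepPacking K v J ∧ ∑ c, #(J c) = ∑ c, #(I c) + 1 := by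
  match l with
  | [] => exact hI.exists_sum_card_succ_of_extendable he hext
  | f :: rest =>
    by_cases hshort : ∃ y ∈ rest, ExchangeArc K v I e y
    · obtain ⟨y, hy, hey⟩ := hshort
      obtain ⟨l₁, l₂, rfl⟩ := List.append_of_mem hy
      refine hI.exists_sum_card_succ he (y :: l₂) ?_ ?_
      · refine List.isChain_cons_cons.mpr ⟨hey, hl.suffix ?_⟩
        exact (List.suffix_append _ _).trans ((List.suffix_cons f _).trans (List.suffix_cons e _))
      · simpa [List.getLast_cons, List.getLast_append] using hext
    · push Not at hshort
      obtain ⟨hef, hl'⟩ := List.isChain_cons_cons.mp hl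
      obtain ⟨b, hef⟩ := hef
      have hused : ∀ y ∈ f :: rest, y ≠ e := fun y hy hye =>
        not_unused_of_mem_of_isChain hl hy (hye ▸ he)
      obtain ⟨J, hJ, hsum⟩ := (hI.isIndepPacking_exchangeAt he hef).exists_sum_card_succ
        (hI.unused_exchangeAt he hef) rest
        (hl'.imp_of_mem_tail_imp fun x y hx hy hxy =>
          hI.exchangeArc_exchangeAt he hef hxy (hused x hx) (hshort y hy))
        (hI.extendable_exchangeAt hef (by simpa using hext) (hused _ (List.getLast_mem _)))
      exact ⟨J, hJ, by rw [hsum, hI.sum_card_exchangeAt hef]⟩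
termination_by l.length
decreasing_by all_goals (try subst_vars); simp; try omega

end IndepPacking

section Union

variable (K : Type*) {W ι κ : Type*} [DivisionRing K] [AddCommGroup W] [Module K W]
  [Fintype ι] [DecidableEq ι] [Fintype κ] [DecidableEq κ] (v : ι → W)

theorem exists_isIndepPacking_card_compl_add_le :
    ∃ I : κ → Finset ι, IsIndepPacking K v I ∧ ∃ A : Finset ι,
      #Aᶜ + Fintype.card κ * finrank K (span K (v '' A)) ≤ ∑ b, #(I b) := by
  classical
  obtain ⟨I, hI, hmax⟩ := exists_max_image ({I | IsIndepPacking K v I} : Finset (κ → Finset ι))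
    (fun I => ∑ b, #(I b)) ⟨fun _ => ∅, by simp [isIndepPacking_empty]⟩
  simp only [mem_filter, mem_univ, true_and] at hI hmax
  -- For a maximum packing `I`, let `A` be the set of elements reachable by exchange arcs from
  -- unused ones: every `I b ∩ A` spans `A`, and every element outside `A` is used.
  set A : Finset ι := {f | ∃ e, Unused I e ∧ Relation.ReflTransGen (ExchangeArc K v I) e f}
  have hmemA {f : ι} :
      f ∈ A ↔ ∃ e, Unused I e ∧ Relation.ReflTransGen (ExchangeArc K v I) e f := by
    simp [A]
  have hnotext {f : ι} (hf : f ∈ A) (b : κ) (hfb : f ∉ I b) : v f ∈ span K (v '' I b) := by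
    by_contra hspan
    obtain ⟨e, he, hef⟩ := hmemA.mp hf
    obtain ⟨l, hl, hlast⟩ := List.exists_isChain_cons_of_relationReflTransGen hef
    obtain ⟨J, hJ, hsum⟩ := hI.exists_sum_card_succ he l hl (hlast ▸ ⟨b, hfb, hspan⟩)
    exact absurd (hmax J hJ) (by omega)
  have hrank (b : κ) : finrank K (span K (v '' A)) ≤ #(I b ∩ A) := by
    rw [← ((hI.linearIndepOn b).mono (by simp)).finrank_span_image]
    have := FiniteDimensional.span_of_finite K ((I b ∩ A).finite_toSet.image v)
    refine Submodule.finrank_mono (span_image_le_of_forall_mem fun f hf => ?_)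
    by_cases hfb : f ∈ I b
    · exact subset_span (Set.mem_image_of_mem v (mem_inter.mpr ⟨hfb, hf⟩))
    rw [show I b ∩ A = I b \ (I b \ A) by rw [sdiff_sdiff_right_self, inf_eq_inter]]
    refine (hI.linearIndepOn b).mem_span_image_sdiff (hnotext hf b hfb) fun g hg => ?_
    by_contra hns
    obtain ⟨e, he, hef⟩ := hmemA.mp hf
    exact (mem_sdiff.mp hg).2 (hmemA.mpr ⟨e, he, hef.tail ⟨b, hfb, hnotext hf b hfb,
      (mem_sdiff.mp hg).1, hns⟩⟩)
  have hcompl : Aᶜ ⊆ univ.biUnion fun b => I b \ A := by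
    intro f hf
    rw [mem_compl] at hf
    have hused : ¬ Unused I f := fun hu => hf (hmemA.mpr ⟨f, hu, .refl⟩)
    obtain ⟨b, hfb⟩ := not_forall_not.mp hused
    exact mem_biUnion.mpr ⟨b, mem_univ b, mem_sdiff.mpr ⟨hfb, hf⟩⟩
  refine ⟨I, hI, A, ?_⟩
  calc #Aᶜ + Fintype.card κ * finrank K (span K (v '' A))
      ≤ ∑ b, #(I b \ A) + ∑ b, #(I b ∩ A) := by
        gcongr
        · exact (card_le_card hcompl).trans card_biUnion_le
        · rw [← card_univ, ← smul_eq_mul, ← sum_const]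
          exact sum_le_sum fun b _ => hrank b
    _ = ∑ b, #(I b) := by
        rw [← sum_add_distrib]
        exact sum_congr rfl fun b _ => by rw [add_comm, card_inter_add_card_sdiff]

theorem exists_isIndepPacking_forall_span_eq
    (h : ∀ A : Finset ι, Fintype.card κ * finrank K (span K (Set.range v)) ≤
      #Aᶜ + Fintype.card κ * finrank K (span K (v '' A))) :
    ∃ I : κ → Finset ι, IsIndepPacking K v I ∧ ∀ b, span K (v '' I b) = span K (Set.range v) := by
  obtain ⟨I, hI, A, hA⟩ := exists_isIndepPacking_card_compl_add_le K v (κ := κ)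
  have := FiniteDimensional.span_of_finite K (Set.finite_range v)
  have hle (b : κ) : span K (v '' I b) ≤ span K (Set.range v) :=
    span_mono (Set.image_subset_range _ _)
  have hcard (b : κ) : #(I b) ≤ finrank K (span K (Set.range v)) := by
    rw [← (hI.linearIndepOn b).finrank_span_image]; exact Submodule.finrank_mono (hle b)
  refine ⟨I, hI, fun b => eq_of_le_of_finrank_eq (hle b)
    (le_antisymm (Submodule.finrank_mono (hle b)) ?_)⟩
  rw [(hI.linearIndepOn b).finrank_span_image]
  by_contra! hlt
  have := sum_lt_sum (fun c _ => hcard c) ⟨b, mem_univ b, hlt⟩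
  simp only [sum_const, card_univ, smul_eq_mul] at this
  linarith [h A]

end Union

namespace Multigraph

variable {G : Multigraph}

lemma card_filter_mem_cut_le_two {ι : Type*} [DecidableEq ι] {s : Finset ι} {A : ι → Finset G.V}
    (hA : (s : Set ι).PairwiseDisjoint A) (e : G.E) : #{i ∈ s | e ∈ G.cut (A i)} ≤ 2 := by
  have hle_one (x : G.V) : #{i ∈ s | x ∈ A i} ≤ 1 :=
    card_le_one.mpr fun i hi j hj =>
      hA.elim_finset (mem_filter.mp hi).1 (mem_filter.mp hj).1 x (mem_filter.mp hi).2
        (mem_filter.mp hj).2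
  calc #{i ∈ s | e ∈ G.cut (A i)}
      ≤ #({i ∈ s | G.fst e ∈ A i} ∪ {i ∈ s | G.snd e ∈ A i}) := by
        refine card_le_card fun i hi => ?_
        simp only [cut, mem_filter, mem_univ, true_and, mem_union] at hi ⊢
        tauto
    _ ≤ 2 := (card_union_le _ _).trans (add_le_add (hle_one _) (hle_one _))

lemma EdgeConnected.card_mul_le {k : ℕ} (h : G.EdgeConnected k) {ι : Type*} [DecidableEq ι]
    {s : Finset ι} (hs : 1 < #s) {A : ι → Finset G.V} (hA : (s : Set ι).PairwiseDisjoint A)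
    (hne : ∀ i ∈ s, (A i).Nonempty) {T : Finset G.E} (hT : ∀ i ∈ s, G.cut (A i) ⊆ T) :
    #s * k ≤ #T * 2 := by
  refine card_mul_le_card_mul (fun i e => e ∈ G.cut (A i)) (fun i hi => ?_)
    (fun e _ => card_filter_mem_cut_le_two hA e)
  obtain ⟨j, hj, hji⟩ := exists_mem_ne hs i
  obtain ⟨x, hx⟩ := hne j hj
  have hAi : A i ≠ univ := fun hAi =>
    hji (hA.elim_finset hj hi x hx (hAi ▸ mem_univ x))
  rw [bipartiteAbove, filter_mem_eq_inter, inter_eq_right.mpr (hT i hi)]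
  exact h.2 (A i) (hne i hi) hAi

lemma EdgeConnected.card_mul_le_two_mul_card {k : ℕ} (h : G.EdgeConnected k) :
    Fintype.card G.V * k ≤ Fintype.card G.E * 2 := by
  simpa using h.card_mul_le (s := univ) (A := fun v => {v})
    (by simpa [Nat.lt_iff_add_one_le] using h.1) (fun v _ w _ hvw => by simpa using hvw) (by simp)
    (fun _ _ => subset_univ _)

variable (G) in
def incidenceVec (e : G.E) : G.V → ZMod 2 := Pi.single (G.fst e) 1 + Pi.single (G.snd e) 1

variable (G) in
def boundary : (G.E → ZMod 2) →ₗ[ZMod 2] G.V → ZMod 2 :=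
  Fintype.linearCombination (ZMod 2) G.incidenceVec

lemma boundary_apply (ψ : G.E → ZMod 2) (v : G.V) :
    G.boundary ψ v = ∑ e ∈ univ.filter (fun e => G.fst e = v), ψ e +
      ∑ e ∈ univ.filter (fun e => G.snd e = v), ψ e := by
  simp [boundary, incidenceVec, Fintype.linearCombination_apply, Pi.single_apply, sum_filter,
    sum_add_distrib, eq_comm]

lemma isFlow_iff_boundary_eq_zero (ψ : G.E → ZMod 2) : G.IsFlow ψ ↔ G.boundary ψ = 0 := by
  simp [IsFlow, funext_iff, boundary_apply, CharTwo.add_eq_zero]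

lemma isFlow_prod_iff {Γ₁ Γ₂ : Type} [AddCommGroup Γ₁] [AddCommGroup Γ₂] (φ : G.E → Γ₁ × Γ₂) :
    G.IsFlow φ ↔ G.IsFlow (fun e => (φ e).1) ∧ G.IsFlow (fun e => (φ e).2) := by
  simp [IsFlow, Prod.ext_iff, Prod.fst_sum, Prod.snd_sum, forall_and]

lemma sum_eq_zero_of_mem_span_incidenceVec {w : G.V → ZMod 2}
    (hw : w ∈ span (ZMod 2) (Set.range G.incidenceVec)) : ∑ v, w v = 0 := by
  induction hw using Submodule.span_induction with
  | mem x hx =>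
    obtain ⟨e, rfl⟩ := hx
    simp [incidenceVec, sum_add_distrib, CharTwo.add_self_eq_zero]
  | zero => simp
  | add x y _ _ hx hy => simp [sum_add_distrib, hx, hy]
  | smul a x _ hx => simp [← mul_sum, hx]

lemma finrank_span_range_incidenceVec_lt [Nonempty G.V] :
    finrank (ZMod 2) (span (ZMod 2) (Set.range G.incidenceVec)) < Fintype.card G.V := by
  obtain ⟨v⟩ := ‹Nonempty G.V›
  rw [← Module.finrank_fintype_fun_eq_card (ZMod 2)]
  refine Submodule.finrank_lt fun htop => ?_
  have := sum_eq_zero_of_mem_span_incidenceVec (htop ▸ mem_top : Pi.single v 1 ∈ _)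
  simp at this

variable (G) in
/-- The classes are the connected components of the spanning subgraph `(V, F)`. -/
def componentSetoid (F : Finset G.E) : Setoid G.V where
  r u v := Pi.single u 1 + Pi.single v 1 ∈ span (ZMod 2) (G.incidenceVec '' F)
  iseqv := by
    refine ⟨fun u => by simp [add_self_eq_zero_of_zmod_two], fun h => by rwa [add_comm], ?_⟩
    intro u v w huv hvw
    convert add_mem huv hvw using 1
    rw [add_assoc, ← add_assoc (Pi.single v 1), add_self_eq_zero_of_zmod_two, zero_add]

noncomputable def componentRep (F : Finset G.E) (v : G.V) : G.V :=
  (Quotient.mk (G.componentSetoid F) v).out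

lemma componentRep_rel (F : Finset G.E) (v : G.V) : G.componentSetoid F (componentRep F v) v :=
  Quotient.mk_out (s := G.componentSetoid F) v

lemma componentRep_eq_of_rel {F : Finset G.E} {u v : G.V} (h : G.componentSetoid F u v) :
    componentRep F u = componentRep F v :=
  congrArg Quotient.out (Quotient.sound h)

lemma componentRep_componentRep (F : Finset G.E) (v : G.V) :
    componentRep F (componentRep F v) = componentRep F v :=
  componentRep_eq_of_rel (componentRep_rel F v)

lemma card_filter_componentRep_ne_le_finrank (F : Finset G.E) :
    #{v | componentRep F v ≠ v} ≤ finrank (ZMod 2) (span (ZMod 2) (G.incidenceVec '' F)) := by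
  set D : Finset G.V := {v | componentRep F v ≠ v}
  let u : D → G.V → ZMod 2 := fun d => Pi.single (d : G.V) 1 + Pi.single (componentRep F d) 1
  have hu : LinearIndependent (ZMod 2) u := by
    refine linearIndependent_of_apply_eq_ite Subtype.val fun i j => ?_
    have hi : componentRep F j ≠ i := fun hji =>
      (mem_filter.mp i.2).2 (by rw [← hji, componentRep_componentRep])
    simp only [u, Pi.add_apply, Pi.single_apply, if_neg hi.symm, add_zero, Subtype.ext_iff]
    exact if_congr eq_comm rfl rfl
  have hspan : span (ZMod 2) (Set.range u) ≤ span (ZMod 2) (G.incidenceVec '' F) :=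
    span_le.mpr <| by rintro _ ⟨d, rfl⟩; exact Setoid.symm' _ (componentRep_rel F d)
  have := Submodule.finrank_mono hspan
  rwa [finrank_span_eq_card hu, Fintype.card_coe] at this

lemma EdgeConnected.mul_le_card_compl_add {k : ℕ} (h : G.EdgeConnected (2 * k))
    (F : Finset G.E) :
    k * (Fintype.card G.V - 1) ≤
      #Fᶜ + k * finrank (ZMod 2) (span (ZMod 2) (G.incidenceVec '' F)) := by
  set R : Finset G.V := {v | componentRep F v = v}
  have hRD : #R + #{v | componentRep F v ≠ v} = Fintype.card G.V :=
    card_filter_add_card_filter_not _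
  have hD := Nat.mul_le_mul_left k (card_filter_componentRep_ne_le_finrank F)
  by_cases hR : #R ≤ 1
  · have : Fintype.card G.V - 1 ≤ #{v | componentRep F v ≠ v} := by omega
    nlinarith [Nat.mul_le_mul_left k this]
  have hcut := h.card_mul_le (s := R) (A := fun r => {v | componentRep F v = r}) (T := Fᶜ)
    (by omega)
    (fun r _ r' _ hrr' => disjoint_filter.mpr fun v _ h₁ h₂ => hrr' (h₁.symm.trans h₂))
    (fun r hr => ⟨r, by simpa [R] using hr⟩)
    (fun r _ e he => by
      refine mem_compl.mpr fun heF => ?_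
      have := componentRep_eq_of_rel (F := F) (u := G.fst e) (v := G.snd e)
        (subset_span ⟨e, heF, rfl⟩)
      simp [cut, this] at he)
  have : Fintype.card G.V - 1 ≤ Fintype.card G.V := Nat.sub_le _ _
  nlinarith

theorem EdgeConnected.exists_isIndepPacking_incidenceVec {κ : Type*} [Fintype κ] [DecidableEq κ]
    (h : G.EdgeConnected (2 * Fintype.card κ)) :
    ∃ I : κ → Finset G.E, IsIndepPacking (ZMod 2) G.incidenceVec I ∧
      ∀ b, span (ZMod 2) (G.incidenceVec '' I b) = span (ZMod 2) (Set.range G.incidenceVec) := by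
  have : Nonempty G.V := Fintype.card_pos_iff.mp (by have := h.1; omega)
  refine exists_isIndepPacking_forall_span_eq (ZMod 2) G.incidenceVec fun A => ?_
  have := finrank_span_range_incidenceVec_lt (G := G)
  exact (Nat.mul_le_mul_left _ (by omega)).trans (h.mul_le_card_compl_add A)

lemma exists_isFlow_eq_one_of_boundary_mem_span {S : Finset G.E}
    (hS : G.boundary 1 ∈ span (ZMod 2) (G.incidenceVec '' S)) :
    ∃ ψ : G.E → ZMod 2, G.IsFlow ψ ∧ ∀ e ∉ S, ψ e = 1 := by
  obtain ⟨c, hc⟩ := (mem_span_image_finset_iff_exists_fun' (ZMod 2)).mp hS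
  refine ⟨1 - fun e => if e ∈ S then c e else 0, ?_, fun e he => by simp [he]⟩
  rw [isFlow_iff_boundary_eq_zero, map_sub, sub_eq_zero, ← hc]
  simp [boundary, Fintype.linearCombination_apply, ite_smul, sum_ite_mem]

theorem EdgeConnected.exists_nowhereZero_flow (h : G.EdgeConnected 4) :
    ∃ φ : G.E → ZMod 2 × ZMod 2, G.IsFlow φ ∧ G.NowhereZero φ := by
  obtain ⟨I, hI, hspan⟩ := h.exists_isIndepPacking_incidenceVec (κ := Bool)
  have hmem (b : Bool) : G.boundary 1 ∈ span (ZMod 2) (G.incidenceVec '' I b) := by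
    rw [hspan b, ← Fintype.range_linearCombination]
    exact LinearMap.mem_range_self _ _
  obtain ⟨ψ₁, hψ₁, h₁⟩ := exists_isFlow_eq_one_of_boundary_mem_span (hmem true)
  obtain ⟨ψ₂, hψ₂, h₂⟩ := exists_isFlow_eq_one_of_boundary_mem_span (hmem false)
  refine ⟨fun e => (ψ₁ e, ψ₂ e), (isFlow_prod_iff _).mpr ⟨hψ₁, hψ₂⟩, fun e he => ?_⟩
  by_cases het : e ∈ I true
  · have hef := disjoint_left.mp (hI.pairwise_disjoint (by decide : true ≠ false)) het
    simp [Prod.ext_iff, h₂ e hef] at he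
  · simp [Prod.ext_iff, h₁ e het] at he

lemma exists_isFlow_pair_of_nowhereZero {φ : G.E → ZMod 2 × ZMod 2} (hφ : G.IsFlow φ)
    (hnz : G.NowhereZero φ) :
    ∃ α β : G.E → ZMod 2, G.IsFlow α ∧ G.IsFlow β ∧ (∀ e, β e = 0 → α e ≠ 0) ∧
      2 * Fintype.card G.E ≤ 3 * #{e | β e ≠ 0} := by
  obtain ⟨hx, hy⟩ := (isFlow_prod_iff φ).mp hφ
  set x : G.E → ZMod 2 := fun e => (φ e).1
  set y : G.E → ZMod 2 := fun e => (φ e).2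
  have hz : G.IsFlow (x + y) := by
    rw [isFlow_iff_boundary_eq_zero] at hx hy ⊢
    rw [map_add, hx, hy, add_zero]
  have hcount : #{e | x e ≠ 0} + #{e | y e ≠ 0} + #{e | (x + y) e ≠ 0} = 2 * Fintype.card G.E := by
    have key : ∀ a b : ZMod 2, (a, b) ≠ 0 →
        (if a ≠ 0 then 1 else 0) + (if b ≠ 0 then 1 else 0) + (if a + b ≠ 0 then 1 else 0) = 2 := by
      decide
    simp only [card_filter, ← sum_add_distrib, Pi.add_apply]
    rw [sum_congr rfl fun e _ => key (x e) (y e) (hnz e), sum_const, card_univ, smul_eq_mul,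
      mul_comm]
  by_cases hY : 2 * Fintype.card G.E ≤ 3 * #{e | y e ≠ 0}
  · exact ⟨x, y, hx, hy, fun e hy0 hx0 => hnz e (Prod.ext hx0 hy0), hY⟩
  by_cases hX : 2 * Fintype.card G.E ≤ 3 * #{e | x e ≠ 0}
  · exact ⟨y, x, hy, hx, fun e hx0 hy0 => hnz e (Prod.ext hx0 hy0), hX⟩
  refine ⟨x, x + y, hx, hz, fun e hz0 hx0 => hnz e (Prod.ext hx0 ?_), by omega⟩
  simpa [x, y, hx0] using hz0

theorem two_pow_card_le_card_nowhereZero {α β : G.E → ZMod 2} (hα : G.IsFlow α)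
    (hβ : G.IsFlow β) (hαβ : ∀ e, β e = 0 → α e ≠ 0) :
    2 ^ #{e | β e ≠ 0} ≤ 2 ^ Fintype.card G.V *
      Nat.card {φ : G.E → ZMod 2 × ZMod 2 // G.IsFlow φ ∧ G.NowhereZero φ} := by
  -- `ker L` consists of the `ℤ₂`-flows vanishing wherever `β` does.
  let L := G.boundary.prod
    (LinearMap.funLeft (ZMod 2) (ZMod 2) (Subtype.val : {e // β e = 0} → G.E))
  have hker {δ : G.E → ZMod 2} (hδ : δ ∈ LinearMap.ker L) :
      G.boundary δ = 0 ∧ ∀ e, β e = 0 → δ e = 0 := by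
    simp only [LinearMap.mem_ker, L, LinearMap.coe_prod, Function.prod, Prod.mk_eq_zero, funext_iff,
      LinearMap.funLeft_apply, Pi.zero_apply] at hδ
    exact ⟨funext hδ.1, fun e he => hδ.2 ⟨e, he⟩⟩
  have hrank : #{e | β e ≠ 0} ≤ Fintype.card G.V + finrank (ZMod 2) (LinearMap.ker L) := by
    have h1 := LinearMap.finrank_range_add_finrank_ker L
    have h2 := Submodule.finrank_le (LinearMap.range L)
    have h3 : #{e | β e ≠ 0} + Fintype.card {e // β e = 0} = Fintype.card G.E := by
      rw [Fintype.card_subtype, add_comm, card_filter_add_card_filter_not, card_univ]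
    simp only [Module.finrank_prod, Module.finrank_fintype_fun_eq_card] at h1 h2
    omega
  have hinj : Nat.card (LinearMap.ker L) ≤
      Nat.card {φ : G.E → ZMod 2 × ZMod 2 // G.IsFlow φ ∧ G.NowhereZero φ} := by
    refine Nat.card_le_card_of_injective
      (fun δ => ⟨fun e => (α e + δ.1 e, β e), (isFlow_prod_iff _).mpr ⟨?_, hβ⟩, fun e he => ?_⟩)
      fun δ δ' hδ => Subtype.ext <| funext fun e => ?_
    · rw [isFlow_iff_boundary_eq_zero] at hα ⊢
      rw [show (fun e => α e + δ.1 e) = α + δ.1 from rfl, map_add, hα, (hker δ.2).1, add_zero]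
    · simp only [Prod.ext_iff, Prod.fst_zero, Prod.snd_zero] at he
      exact hαβ e he.2 (by simpa [(hker δ.2).2 e he.2] using he.1)
    · simpa using congrArg (fun φ => (φ.1 e).1) hδ
  calc 2 ^ #{e | β e ≠ 0}
      ≤ 2 ^ (Fintype.card G.V + finrank (ZMod 2) (LinearMap.ker L)) :=
        Nat.pow_le_pow_right two_pos hrank
    _ = 2 ^ Fintype.card G.V * Nat.card (LinearMap.ker L) := by
        rw [pow_add, Module.natCard_eq_pow_finrank (K := ZMod 2), Nat.card_zmod]
    _ ≤ _ := Nat.mul_le_mul_left _ hinj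

end Multigraph

/-- If `G` is a 4-edge-connected graph with `n` vertices,
then `G` has at least `2 ^ (n/250)` nowhere-zero `ℤ₂ × ℤ₂`-flows. -/
theorem stmt12 (G : Multigraph) (h : G.EdgeConnected 4) :
    (2 : ℝ) ^ ((Fintype.card G.V : ℝ) / 250) ≤
      (Nat.card {φ : G.E → ZMod 2 × ZMod 2 // G.IsFlow φ ∧ G.NowhereZero φ} : ℝ) := by
  obtain ⟨φ, hφ, hnz⟩ := h.exists_nowhereZero_flow
  obtain ⟨α, β, hα, hβ, hαβ, hsupp⟩ := Multigraph.exists_isFlow_pair_of_nowhereZero hφ hnz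
  have hcount := Multigraph.two_pow_card_le_card_nowhereZero hα hβ hαβ
  have hedges := h.card_mul_le_two_mul_card
  set n := Fintype.card G.V
  set c := #{e | β e ≠ 0}
  set N := Nat.card {φ : G.E → ZMod 2 × ZMod 2 // G.IsFlow φ ∧ G.NowhereZero φ}
  have hexp : (n : ℝ) / 250 ≤ c - n := by
    have : 4 * n ≤ 3 * c := by omega
    have : (4 * n : ℝ) ≤ 3 * c := by exact_mod_cast this
    linarith [(Nat.cast_nonneg n : (0 : ℝ) ≤ n)]
  calc (2 : ℝ) ^ ((n : ℝ) / 250)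
      ≤ 2 ^ ((c : ℝ) - n) := Real.rpow_le_rpow_of_exponent_le one_le_two hexp
    _ = 2 ^ c / 2 ^ n := by rw [Real.rpow_sub two_pos, Real.rpow_natCast, Real.rpow_natCast]
    _ ≤ N := by
        rw [div_le_iff₀ (by positivity), mul_comm]
        exact_mod_cast hcount
end
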